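/- arXiv:1510.00560 — 10 statements merged into one kernel-verified Lean document; each statement's English description precedes it below -/
import Mathlib

section
/- Let n ≥ 3, let a_1,…,a_n > 0, let A_n be the diagonal matrix with diagonal entries a_1,…,a_n, and let C_n be the periodic chain matrix. Then the matrix A_nC_n has the eigenvalue 0 with one-dimensional eigenspace spanned by (1,1,…,1), its remaining n−1 eigenvalues (counted with algebraic multiplicity) are real and positive, and A_nC_n is diagonalizable, i.e. for every eigenvalue the geometric multiplicity equals the algebraic multiplicity. -/
open Matrix Polynomial

/-
With `B = diag (√a)` we have `A C = B (B C B) B⁻¹`, so `A C` is similar to the symmetric positive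
semidefinite matrix `B C B`: it is diagonalizable with nonnegative eigenvalues, of which exactly
`rank C` are nonzero. The quadratic form of the chain matrix is `∑ (v i - v (i+1))²`, so its kernel
consists of the constant vectors, its rank is `n - 1`, and `0` is a simple eigenvalue of `A C`.
-/

/-- The periodic chain matrix `C_n`: `2` on the diagonal, `-1` at positions
`(i, i+1)` and `(i, i-1)` with indices modulo `n`, and `0` elsewhere. -/
def pchain (n : ℕ) [NeZero n] : Matrix (Fin n) (Fin n) ℝ :=
  Matrix.of fun i j => if i = j then 2 else if j = i + 1 ∨ i = j + 1 then -1 else 0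

namespace Fin
variable {n : ℕ} [NeZero n]
open Fin.CommRing

lemma add_one_ne_self (hn : 2 ≤ n) (i : Fin n) : i + 1 ≠ i := by
  intro h
  have : (1 : Fin n) = 0 := by linear_combination h
  simp [Fin.ext_iff, Nat.mod_eq_of_lt (by omega : 1 < n)] at this

lemma add_one_ne_sub_one (hn : 3 ≤ n) (i : Fin n) : i + 1 ≠ i - 1 := by
  intro h
  have : ((2 : ℕ) : Fin n) = 0 := by push_cast; linear_combination h
  simp [Fin.ext_iff, Nat.mod_eq_of_lt (by omega : 2 < n)] at this

lemma eq_const_of_forall_add_one {α : Type*} {f : Fin n → α} (hf : ∀ i, f (i + 1) = f i)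
    (i : Fin n) : f i = f 0 := by
  have key : ∀ m : ℕ, f m = f 0 := by
    intro m
    induction m with
    | zero => simp
    | succ k ih => rw [Nat.cast_succ, hf, ih]
  simpa using key i

end Fin

section WeightedPosSemidef
variable {ι : Type*} [Fintype ι] [DecidableEq ι]

lemma Matrix.charpoly_mul_mul_inv {R : Type*} [CommRing R] {P : Matrix ι ι R}
    (hP : IsUnit P.det) (D : Matrix ι ι R) : (P * D * P⁻¹).charpoly = D.charpoly := by
  rw [charpoly_mul_comm, ← Matrix.mul_assoc, nonsing_inv_mul _ hP, Matrix.one_mul]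

lemma Matrix.diagonal_mul_mulVec_eq_zero_iff {R : Type*} [Semiring R] [NoZeroDivisors R]
    {a : ι → R} (ha : ∀ i, a i ≠ 0) (C : Matrix ι ι R) (v : ι → R) :
    (diagonal a * C) *ᵥ v = 0 ↔ C *ᵥ v = 0 := by
  simp [← mulVec_mulVec, funext_iff, mulVec_diagonal, ha]

lemma Matrix.PosSemidef.exists_eq_unitary_mul_diagonal_mul_star {S : Matrix ι ι ℝ}
    (hS : S.PosSemidef) :
    ∃ (U : Matrix ι ι ℝ) (d : ι → ℝ), U * star U = 1 ∧ (∀ i, 0 ≤ d i) ∧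
      Fintype.card {i // d i ≠ 0} = S.rank ∧ S = U * diagonal d * star U := by
  refine ⟨hS.1.eigenvectorUnitary, hS.1.eigenvalues,
    Matrix.mem_unitaryGroup_iff.mp hS.1.eigenvectorUnitary.2, hS.eigenvalues_nonneg,
    hS.1.rank_eq_card_non_zero_eigs.symm, ?_⟩
  simpa only [Unitary.conjStarAlgAut_apply, RCLike.ofReal_real_eq_id, Function.id_comp]
    using hS.1.spectral_theorem

theorem Matrix.PosSemidef.exists_diagonal_mul_eq_conj_diagonal {a : ι → ℝ} (ha : ∀ i, 0 < a i)
    {C : Matrix ι ι ℝ} (hC : C.PosSemidef) :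
    ∃ (P : Matrix ι ι ℝ) (d : ι → ℝ), IsUnit P.det ∧ (∀ i, 0 ≤ d i) ∧
      Fintype.card {i // d i ≠ 0} = C.rank ∧ diagonal a * C = P * diagonal d * P⁻¹ := by
  set B := diagonal fun i => √(a i)
  have hB : IsUnit B.det := by
    simpa [B, det_diagonal, Finset.prod_ne_zero_iff] using fun i => Real.sqrt_ne_zero'.mpr (ha i)
  have hBB : B * B = diagonal a := by
    simp [B, diagonal_mul_diagonal, Real.mul_self_sqrt (ha _).le]
  have hS : (B * C * B).PosSemidef := by
    simpa [B, diagonal_conjTranspose] using hC.mul_mul_conjTranspose_same B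
  obtain ⟨U, d, hUU, hd, hcard, hspec⟩ := hS.exists_eq_unitary_mul_diagonal_mul_star
  have hP : (B * U) * (star U * B⁻¹) = 1 := by
    rw [Matrix.mul_assoc, ← Matrix.mul_assoc U, hUU, Matrix.one_mul, mul_nonsing_inv _ hB]
  refine ⟨B * U, d, isUnit_det_of_right_inverse hP, hd, ?_, ?_⟩
  · rw [hcard, rank_mul_eq_left_of_isUnit_det _ _ hB, rank_mul_eq_right_of_isUnit_det _ _ hB]
  · calc diagonal a * C = B * (B * C * B) * B⁻¹ := by
          simp only [← hBB, Matrix.mul_assoc, mul_nonsing_inv _ hB, Matrix.mul_one]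
      _ = B * U * diagonal d * (B * U)⁻¹ := by
          rw [hspec, inv_eq_right_inv hP]; simp only [Matrix.mul_assoc]

end WeightedPosSemidef

lemma exists_prod_X_sub_C_eq_X_mul_prod {ι : Type*} [Fintype ι] {d : ι → ℝ} (hd : ∀ i, 0 ≤ d i)
    {m : ℕ} (hm : Fintype.card {i // d i ≠ 0} = m) (hcard : m + 1 = Fintype.card ι) :
    ∃ μ : Fin m → ℝ, (∀ k, 0 < μ k) ∧ ∏ i, (X - C (d i)) = X * ∏ k, (X - C (μ k)) := by
  classical
  have hzero : Fintype.card {i // d i = 0} = 1 := by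
    have := Fintype.card_subtype_compl (fun i => d i ≠ 0)
    simp only [not_not] at this
    omega
  let e : Fin m ≃ {i // d i ≠ 0} := (Fintype.equivFinOfCardEq hm).symm
  refine ⟨fun k => d (e k), fun k => (hd _).lt_of_ne (e k).2.symm, ?_⟩
  rw [← Fintype.prod_subtype_mul_prod_subtype (fun i => d i = 0),
    ← e.prod_comp (fun i => X - C (d i))]
  congr 1
  calc ∏ i : {i // d i = 0}, (X - C (d i)) = ∏ _i : {i // d i = 0}, X :=
        Fintype.prod_congr _ _ fun i => by rw [i.2, map_zero, sub_zero]
    _ = X := by rw [Finset.prod_const, Finset.card_univ, hzero, pow_one]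

section PeriodicChain
variable {n : ℕ} [NeZero n]
open Fin.CommRing

lemma pchain_apply (hn : 3 ≤ n) (i j : Fin n) :
    pchain n i j = 2 * (if j = i then 1 else 0) - (if j = i + 1 then 1 else 0)
      - (if j = i - 1 then 1 else 0) := by
  have h₁ := Fin.add_one_ne_self (by omega) i
  have h₂ := Fin.add_one_ne_self (by omega) (i - 1)
  have h₃ := Fin.add_one_ne_sub_one hn i
  rw [sub_add_cancel] at h₂
  have : i = j + 1 ↔ j = i - 1 := by rw [eq_sub_iff_add_eq, eq_comm]
  simp only [pchain, of_apply, this]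
  grind

lemma pchain_mulVec (hn : 3 ≤ n) (v : Fin n → ℝ) (i : Fin n) :
    (pchain n *ᵥ v) i = 2 * v i - v (i + 1) - v (i - 1) := by
  simp [mulVec, dotProduct, pchain_apply hn, sub_mul, Finset.sum_sub_distrib]

lemma pchain_isHermitian (hn : 3 ≤ n) : (pchain n).IsHermitian := by
  ext i j
  simp only [conjTranspose_apply, star_trivial, pchain_apply hn, eq_sub_iff_add_eq]
  grind

lemma dotProduct_pchain_mulVec (hn : 3 ≤ n) (v : Fin n → ℝ) :
    v ⬝ᵥ (pchain n *ᵥ v) = ∑ i, (v i - v (i + 1)) ^ 2 := by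
  have shift_sq : ∑ i, v (i + 1) ^ 2 = ∑ i, v i ^ 2 :=
    Fintype.sum_equiv (Equiv.addRight 1) _ _ fun _ => rfl
  have shift_mul : ∑ i, v i * v (i - 1) = ∑ i, v i * v (i + 1) :=
    Fintype.sum_equiv (Equiv.subRight 1) _ _ fun i => by simp [mul_comm]
  calc v ⬝ᵥ (pchain n *ᵥ v)
      = ∑ i, (2 * v i ^ 2 - v i * v (i + 1) - v i * v (i - 1)) := by
        simp only [dotProduct, pchain_mulVec hn]; ring_nf
    _ = ∑ i, (v i ^ 2 + v (i + 1) ^ 2 - 2 * (v i * v (i + 1))) := by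
        simp only [Finset.sum_sub_distrib, Finset.sum_add_distrib, ← Finset.mul_sum, shift_sq,
          shift_mul]
        ring
    _ = ∑ i, (v i - v (i + 1)) ^ 2 := by ring_nf

lemma pchain_posSemidef (hn : 3 ≤ n) : (pchain n).PosSemidef :=
  posSemidef_iff_dotProduct_mulVec.mpr ⟨pchain_isHermitian hn, fun v => by
    rw [star_trivial, dotProduct_pchain_mulVec hn]; positivity⟩

lemma pchain_mulVec_eq_zero_iff (hn : 3 ≤ n) (v : Fin n → ℝ) :
    pchain n *ᵥ v = 0 ↔ ∃ c : ℝ, v = fun _ => c := by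
  constructor
  · intro hv
    have hsum : ∑ i, (v i - v (i + 1)) ^ 2 = 0 := by
      rw [← dotProduct_pchain_mulVec hn, hv, dotProduct_zero]
    have hstep (i : Fin n) : v (i + 1) = v i := by
      have := (Finset.sum_eq_zero_iff_of_nonneg fun i _ => sq_nonneg (v i - v (i + 1))).mp
        hsum i (Finset.mem_univ i)
      linarith [pow_eq_zero_iff two_ne_zero |>.mp this]
    exact ⟨v 0, funext (Fin.eq_const_of_forall_add_one hstep)⟩
  · rintro ⟨c, rfl⟩
    funext i
    rw [Pi.zero_apply, pchain_mulVec hn]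
    ring

lemma rank_pchain (hn : 3 ≤ n) : (pchain n).rank = n - 1 := by
  have hker : LinearMap.ker (pchain n).mulVecLin = ℝ ∙ (fun _ => 1 : Fin n → ℝ) := by
    ext v
    simp only [LinearMap.mem_ker, mulVecLin_apply, Submodule.mem_span_singleton,
      pchain_mulVec_eq_zero_iff hn, funext_iff, Pi.smul_apply, smul_eq_mul, mul_one, eq_comm]
  have := (pchain n).mulVecLin.finrank_range_add_finrank_ker
  rw [hker, finrank_span_singleton (fun h => one_ne_zero (congrFun h 0)),
    Module.finrank_fin_fun] at this
  rw [rank]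
  omega

end PeriodicChain

theorem stmt0 (n : ℕ) [NeZero n] (hn : 3 ≤ n) (a : Fin n → ℝ) (ha : ∀ i, 0 < a i) :
    (∀ v : Fin n → ℝ,
      (Matrix.diagonal a * pchain n).mulVec v = 0 ↔ ∃ c : ℝ, v = fun _ => c) ∧
    (∃ μ : Fin (n - 1) → ℝ, (∀ i, 0 < μ i) ∧
      (Matrix.diagonal a * pchain n).charpoly =
        X * ∏ i : Fin (n - 1), (X - C (μ i))) ∧
    (∃ (P : Matrix (Fin n) (Fin n) ℝ) (d : Fin n → ℝ), IsUnit P.det ∧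
      Matrix.diagonal a * pchain n = P * Matrix.diagonal d * P⁻¹) := by
  obtain ⟨P, d, hP, hd, hcard, hconj⟩ :=
    (pchain_posSemidef hn).exists_diagonal_mul_eq_conj_diagonal ha
  refine ⟨fun v => ?_, ?_, ⟨P, d, hP, hconj⟩⟩
  · rw [diagonal_mul_mulVec_eq_zero_iff fun i => (ha i).ne', pchain_mulVec_eq_zero_iff hn]
  · rw [hconj, charpoly_mul_mul_inv hP, charpoly_diagonal]
    exact exists_prod_X_sub_C_eq_X_mul_prod hd (hcard.trans (rank_pchain hn))
      (by simp only [Fintype.card_fin]; omega)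
end

section
/- Let n ≥ 3, let a_1,…,a_n > 0, let A_n be the diagonal matrix with diagonal entries a_1,…,a_n, and let C_n be the periodic chain matrix. Write det(A_nC_n − λ I_n) = Σ_{j=0}^{n} p_j(A_n) (−λ)^{j} with p_n = 1. Then the coefficient of (−λ)^{n−1} is p_{n−1}(A_n) = 2 Σ_{i=1}^n a_i, and the coefficient of (−λ)^{n−2} is p_{n−2}(A_n) = Σ_{1 ≤ i < j ≤ n} c_{i,j} a_i a_j, where c_{i,j} = 3 if i − j ≡ ±1 (mod n) and c_{i,j} = 4 otherwise. -/
open Matrix Polynomial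

/-!
Up to the sign `(-1)^(n-j)`, the coefficient of `(-λ)^j` in `det (M - λ I)` is the coefficient
of `X^j` in the characteristic polynomial of `M`, and `(-1)^k` times its coefficient of
`X^(n-k)` is the sum of the `k × k` principal minors of `M`. For `M = A_n C_n` the `1 × 1` minors
are `2 a_i`, and the `2 × 2` minor on `{i, j}` is `a_i a_j (4 - C_ij C_ji)`, where
`C_ij C_ji = 1` if `i, j` are cyclic neighbours and `0` otherwise.
-/

namespace Finset

variable {α M : Type*} [LinearOrder α] [Fintype α] [LocallyFiniteOrderTop α] [AddCommMonoid M]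

theorem sum_powersetCard_two_univ (f : Finset α → M) :
    ∑ t ∈ univ.powersetCard 2, f t = ∑ i, ∑ j ∈ Ioi i, f {i, j} := by
  have hne {t : Finset α} (ht : t ∈ univ.powersetCard 2) : t.Nonempty :=
    card_pos.mp (by rw [mem_powersetCard_univ.mp ht]; norm_num)
  rw [sum_sigma']
  refine (sum_bij' (fun p _ => {p.1, p.2}) (fun t ht => ⟨t.min' (hne ht), t.max' (hne ht)⟩)
    ?_ ?_ ?_ ?_ fun _ _ => rfl).symm
  · rintro ⟨i, j⟩ hij
    simpa using card_pair (mem_Ioi.mp (mem_sigma.mp hij).2).ne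
  · intro t ht
    simpa using min'_lt_max'_of_card t (by simp_all)
  · rintro ⟨i, j⟩ hij
    simp [(mem_Ioi.mp (mem_sigma.mp hij).2).le]
  · intro t ht
    obtain ⟨x, y, -, rfl⟩ := card_eq_two.mp (mem_powersetCard_univ.mp ht)
    rcases le_total x y with h | h
    · simp [h]
    · simp [h, pair_comm]

end Finset

namespace Matrix

theorem det_submatrix_pair {α R : Type*} [LinearOrder α] [CommRing R]
    (M : Matrix α α R) {i j : α} (hij : i < j) :
    (M.submatrix (Subtype.val : ({i, j} : Finset α) → α) Subtype.val).det =
      M i i * M j j - M i j * M j i := by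
  have hcard : ({i, j} : Finset α).card = 2 := Finset.card_pair hij.ne
  let e := (Finset.orderIsoOfFin _ hcard).toEquiv
  have h0 : (e 0 : α) = i := by
    change Finset.orderEmbOfFin _ hcard ⟨0, two_pos⟩ = i
    rw [Finset.orderEmbOfFin_zero hcard two_pos, Finset.min'_pair, min_eq_left hij.le]
  have h1 : (e 1 : α) = j := by
    change Finset.orderEmbOfFin _ hcard ⟨2 - 1, by norm_num⟩ = j
    rw [Finset.orderEmbOfFin_last hcard two_pos, Finset.max'_pair, max_eq_right hij.le]
  rw [← det_submatrix_equiv_self e, det_fin_two]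
  simp [h0, h1]

theorem charpoly_coeff_card_sub_two {ι R : Type*} [Fintype ι] [LinearOrder ι]
    [LocallyFiniteOrderTop ι] [CommRing R] (M : Matrix ι ι R) (h : 2 ≤ Fintype.card ι) :
    M.charpoly.coeff (Fintype.card ι - 2) =
      ∑ i, ∑ j ∈ Finset.Ioi i, (M i i * M j j - M i j * M j i) := by
  rw [charpoly_coeff_eq_sum_minors M 2 h, neg_one_sq, one_mul,
    Finset.sum_powersetCard_two_univ]
  exact Finset.sum_congr rfl fun i _ => Finset.sum_congr rfl fun j hj =>
    det_submatrix_pair M (Finset.mem_Ioi.mp hj)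

theorem det_sub_smul_one_eq_sum {ι R : Type*} [Fintype ι] [DecidableEq ι] [CommRing R]
    [Nontrivial R] (M : Matrix ι ι R) (t : R) :
    (M - t • (1 : Matrix ι ι R)).det =
      ∑ j ∈ Finset.range (Fintype.card ι + 1),
        (-1) ^ (Fintype.card ι - j) * M.charpoly.coeff j * (-t) ^ j := by
  rw [← neg_sub, det_neg, smul_one_eq_diagonal, ← scalar_apply, ← eval_charpoly,
    eval_eq_sum_range, charpoly_natDegree_eq_dim, Finset.mul_sum]
  refine Finset.sum_congr rfl fun j hj => ?_
  have hsign : (-1 : R) ^ Fintype.card ι = (-1) ^ (Fintype.card ι - j) * (-1) ^ j := by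
    rw [← pow_add, Nat.sub_add_cancel (Finset.mem_range_succ_iff.mp hj)]
  rw [hsign, neg_pow t]
  ring

end Matrix

section pchain

variable {n : ℕ} [NeZero n]

theorem pchain_apply_self (i : Fin n) : pchain n i i = 2 := if_pos rfl

theorem pchain_mul_pchain_symm {i j : Fin n} (hij : i ≠ j) :
    pchain n i j * pchain n j i = if j = i + 1 ∨ i = j + 1 then 1 else 0 := by
  by_cases hadj : j = i + 1 ∨ i = j + 1
  · simp [pchain, hij, hij.symm, hadj, or_comm.mp hadj]
  · simp [pchain, hij, hij.symm, hadj, mt or_comm.mp hadj]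

end pchain

theorem stmt2_general (n : ℕ) [NeZero n] (hn : 3 ≤ n) (a : Fin n → ℝ) :
    ∃ p : ℕ → ℝ, p n = 1 ∧
      (∀ lam : ℝ,
        (Matrix.diagonal a * pchain n - lam • (1 : Matrix (Fin n) (Fin n) ℝ)).det =
          ∑ j ∈ Finset.range (n + 1), p j * (-lam) ^ j) ∧
      p (n - 1) = 2 * ∑ i, a i ∧
      p (n - 2) = ∑ i : Fin n, ∑ j ∈ Finset.Ioi i,
        (if j = i + 1 ∨ i = j + 1 then (3 : ℝ) else 4) * a i * a j := by
  set M := diagonal a * pchain n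
  have hM_apply (i j : Fin n) : M i j = a i * pchain n i j := diagonal_mul a _ i j
  have hcard : Fintype.card (Fin n) = n := Fintype.card_fin n
  refine ⟨fun j => (-1) ^ (n - j) * M.charpoly.coeff j, ?_, ?_, ?_, ?_⟩
  · simpa [hcard] using M.charpoly_monic.coeff_natDegree
  · simpa [hcard] using M.det_sub_smul_one_eq_sum
  · have htrace := M.trace_eq_neg_charpoly_coeff
    rw [hcard] at htrace
    beta_reduce
    rw [Nat.sub_sub_self (by omega), pow_one, neg_one_mul, ← htrace, trace, Finset.mul_sum]
    exact Finset.sum_congr rfl fun i _ => by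
      rw [diag_apply, hM_apply, pchain_apply_self, mul_comm]
  · have hminors := M.charpoly_coeff_card_sub_two (by rw [hcard]; omega)
    rw [hcard] at hminors
    beta_reduce
    rw [Nat.sub_sub_self (by omega), neg_one_sq, one_mul, hminors]
    refine Finset.sum_congr rfl fun i _ => Finset.sum_congr rfl fun j hj => ?_
    have hij : i ≠ j := (Finset.mem_Ioi.mp hj).ne
    simp only [hM_apply, pchain_apply_self]
    have hprod := pchain_mul_pchain_symm hij
    split_ifs at hprod ⊢ <;> linear_combination (-(a i * a j)) * hprod

theorem stmt2 (n : ℕ) [NeZero n] (hn : 3 ≤ n) (a : Fin n → ℝ) (ha : ∀ i, 0 < a i) :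
    ∃ p : ℕ → ℝ, p n = 1 ∧
      (∀ lam : ℝ,
        (Matrix.diagonal a * pchain n - lam • (1 : Matrix (Fin n) (Fin n) ℝ)).det =
          ∑ j ∈ Finset.range (n + 1), p j * (-lam) ^ j) ∧
      p (n - 1) = 2 * ∑ i, a i ∧
      p (n - 2) = ∑ i : Fin n, ∑ j ∈ Finset.Ioi i,
        (if j = i + 1 ∨ i = j + 1 then (3 : ℝ) else 4) * a i * a j :=
  stmt2_general n hn a
end

section
/- Let a_1, a_2, a_3 > 0, let A_3 be the diagonal matrix with these diagonal entries, and let C_3 be the periodic chain matrix for n = 3. Then det(A_3C_3 − λ I_3) = −λ (λ² − 2(a_1+a_2+a_3)λ + 3(a_1a_2+a_1a_3+a_2a_3)), and both roots of the quadratic factor λ² − 2(a_1+a_2+a_3)λ + 3(a_1a_2+a_1a_3+a_2a_3) are real and positive. -/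
open Matrix Polynomial

/-! The determinant is a direct cofactor expansion; `λ = 0` is a root because every row of `C₃`
sums to zero. With `s = Σ aᵢ` and `p = Σ aᵢaⱼ`, the quadratic factor has roots `s ± √(s² - 3p)`:
they are real since `s² - 3p = ((a₁-a₂)² + (a₁-a₃)² + (a₂-a₃)²) / 2 ≥ 0`, and positive since
`p > 0` forces `√(s² - 3p) < s`. -/

theorem det_diagonal_mul_pchain_three_sub_smul (a1 a2 a3 lam : ℝ) :
    (diagonal ![a1, a2, a3] * pchain 3 - lam • (1 : Matrix (Fin 3) (Fin 3) ℝ)).det =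
      -lam * (lam ^ 2 - 2 * (a1 + a2 + a3) * lam + 3 * (a1 * a2 + a1 * a3 + a2 * a3)) := by
  rw [det_fin_three]
  simp only [pchain, Matrix.sub_apply, diagonal_mul, of_apply, Matrix.smul_apply, one_apply,
    smul_eq_mul, Fin.isValue, cons_val_zero, cons_val_one, cons_val, Fin.reduceEq, Fin.reduceAdd,
    ↓reduceIte, one_ne_zero, zero_ne_one, or_false, or_true, mul_one, mul_neg, mul_zero, sub_zero,
    neg_mul, neg_neg, zero_add]
  ring

theorem three_mul_sum_mul_le_sq_sum (a1 a2 a3 : ℝ) :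
    3 * (a1 * a2 + a1 * a3 + a2 * a3) ≤ (a1 + a2 + a3) ^ 2 := by
  nlinarith [sq_nonneg (a1 - a2), sq_nonneg (a1 - a3), sq_nonneg (a2 - a3)]

theorem exists_pos_roots_of_quadratic {s q : ℝ} (hs : 0 < s) (hq : 0 < q) (hdisc : q ≤ s ^ 2) :
    ∃ r1 r2 : ℝ, 0 < r1 ∧ 0 < r2 ∧ ∀ x : ℝ, x ^ 2 - 2 * s * x + q = (x - r1) * (x - r2) := by
  set d := √(s ^ 2 - q)
  have hd_sq : d ^ 2 = s ^ 2 - q := Real.sq_sqrt (sub_nonneg.mpr hdisc)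
  have hd_nonneg : 0 ≤ d := Real.sqrt_nonneg _
  have hd_lt : d < s := by nlinarith
  exact ⟨s + d, s - d, by linarith, by linarith, fun x => by linear_combination hd_sq⟩

theorem stmt4 (a1 a2 a3 : ℝ) (h1 : 0 < a1) (h2 : 0 < a2) (h3 : 0 < a3) :
    (∀ lam : ℝ,
      (Matrix.diagonal ![a1, a2, a3] * pchain 3 - lam • (1 : Matrix (Fin 3) (Fin 3) ℝ)).det =
        -lam * (lam ^ 2 - 2 * (a1 + a2 + a3) * lam + 3 * (a1 * a2 + a1 * a3 + a2 * a3))) ∧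
    ∃ r1 r2 : ℝ, 0 < r1 ∧ 0 < r2 ∧ ∀ lam : ℝ,
      lam ^ 2 - 2 * (a1 + a2 + a3) * lam + 3 * (a1 * a2 + a1 * a3 + a2 * a3) =
        (lam - r1) * (lam - r2) :=
  ⟨det_diagonal_mul_pchain_three_sub_smul a1 a2 a3,
    exists_pos_roots_of_quadratic (by positivity) (by positivity)
      (three_mul_sum_mul_le_sq_sum a1 a2 a3)⟩
end

section
/- Let λ_1 ≥ λ_2 > 0 be given. Then there exist a_1, a_2, a_3 > 0 such that, with A_3 the diagonal matrix with entries a_1, a_2, a_3 and C_3 the periodic chain matrix for n = 3, the matrix A_3C_3 has eigenvalues λ_1, λ_2 and 0. Moreover, if λ_1 = λ_2 = λ, then the only such triple is a_1 = a_2 = a_3 = λ/3. -/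
open Matrix Polynomial

/-! `C₃` kills the constant vector, so `A₃C₃` always has eigenvalue `0`; its characteristic
polynomial is `X³ - 2(a₁ + a₂ + a₃)X² + 3(a₁a₂ + a₁a₃ + a₂a₃)X`, so the other two eigenvalues
are pinned down by `λ₁ + λ₂ = 2∑ aᵢ` and `λ₁λ₂ = 3∑ aᵢaⱼ`. Taking `a₁ = a₂ = λ₂/3` solves these
with `a₃ = (3λ₁ - λ₂)/6 > 0`. A double eigenvalue `λ` forces `(∑ aᵢ)² = 3∑ aᵢaⱼ`,
i.e. `∑ (aᵢ - aⱼ)² = 0`. -/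

theorem charpoly_diagonal_mul_pchain_three (a1 a2 a3 : ℝ) :
    (diagonal ![a1, a2, a3] * pchain 3).charpoly =
      X ^ 3 - C (2 * (a1 + a2 + a3)) * X ^ 2 + C (3 * (a1 * a2 + a1 * a3 + a2 * a3)) * X := by
  rw [charpoly, det_fin_three]
  simp [mul_apply, pchain, Fin.sum_univ_three, diagonal]
  simp only [map_ofNat]
  ring

theorem X_mul_X_sub_C_mul_X_sub_C {R : Type*} [CommRing R] (u v : R) :
    X * (X - C u) * (X - C v) = X ^ 3 - C (u + v) * X ^ 2 + C (u * v) * X := by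
  simp only [map_add, map_mul]
  ring

theorem eq_of_X_pow_three_sub_C_mul_X_sq_add_C_mul_X_eq {R : Type*} [CommRing R]
    {s p s' p' : R}
    (h : X ^ 3 - C s * X ^ 2 + C p * X = X ^ 3 - C s' * X ^ 2 + C p' * X) :
    s = s' ∧ p = p' := by
  have h2 := congrArg (coeff · 2) h
  have h1 := congrArg (coeff · 1) h
  simp only [coeff_add, coeff_sub, coeff_C_mul, coeff_X_pow, coeff_X] at h1 h2
  norm_num at h1 h2
  exact ⟨h2, h1⟩

theorem eq_and_eq_of_sq_add_eq_three_mul {a b c : ℝ}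
    (h : (a + b + c) ^ 2 = 3 * (a * b + a * c + b * c)) : a = b ∧ b = c := by
  have hsq : (a - b) ^ 2 + (a - c) ^ 2 + (b - c) ^ 2 = 0 := by linear_combination 2 * h
  constructor <;> nlinarith [sq_nonneg (a - b), sq_nonneg (a - c), sq_nonneg (b - c)]

theorem stmt5 (l1 l2 : ℝ) (h12 : l1 ≥ l2) (h2 : 0 < l2) :
    (∃ a1 a2 a3 : ℝ, 0 < a1 ∧ 0 < a2 ∧ 0 < a3 ∧
      (Matrix.diagonal ![a1, a2, a3] * pchain 3).charpoly =
        X * (X - C l1) * (X - C l2)) ∧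
    (l1 = l2 → ∀ a1 a2 a3 : ℝ, 0 < a1 → 0 < a2 → 0 < a3 →
      (Matrix.diagonal ![a1, a2, a3] * pchain 3).charpoly =
        X * (X - C l1) * (X - C l2) →
      a1 = l1 / 3 ∧ a2 = l1 / 3 ∧ a3 = l1 / 3) := by
  refine ⟨?_, ?_⟩
  · refine ⟨l2 / 3, l2 / 3, (3 * l1 - l2) / 6, by linarith, by linarith, by linarith, ?_⟩
    rw [charpoly_diagonal_mul_pchain_three, X_mul_X_sub_C_mul_X_sub_C]
    congr 3
    · congr 1; ring
    · ring
  · rintro rfl a1 a2 a3 - - - hchar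
    rw [charpoly_diagonal_mul_pchain_three, X_mul_X_sub_C_mul_X_sub_C] at hchar
    obtain ⟨hsum, hprod⟩ := eq_of_X_pow_three_sub_C_mul_X_sq_add_C_mul_X_eq hchar
    have hsum' : a1 + a2 + a3 = l1 := by linarith
    obtain ⟨ha12, ha23⟩ := eq_and_eq_of_sq_add_eq_three_mul (by rw [hsum', hprod, sq])
    refine ⟨?_, ?_, ?_⟩ <;> linarith
end

section
/- Let n ≥ 3 and η > 0, and let Q_η be the set of points a = (a_1,…,a_n) ∈ ℝ^n satisfying Σ_{1 ≤ i < j ≤ n} c_{i,j} a_i a_j = η (with c_{i,j} = 3 if i − j ≡ ±1 mod n and c_{i,j} = 4 otherwise) and a_1 + ⋯ + a_n = 1/2. Then: (a) if η < 1/2 − 3/(4n), Q_η is a nonempty compact subset of the hyperplane a_1 + ⋯ + a_n = 1/2 whose intersection with the open positive orthant ℝ_{>0}^n is nonempty; (b) if η = 1/2 − 3/(4n), then Q_η consists of the single point (1/(2n), …, 1/(2n)), which has positive coordinates; (c) if η > 1/2 − 3/(4n), then Q_η is empty. -/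
open Matrix Polynomial Finset

namespace Stmt6Aux

variable {n : ℕ} [NeZero n]

noncomputable def p (a : Fin n → ℝ) : ℝ :=
  ∑ i : Fin n, ∑ j ∈ Finset.Ioi i,
    (if j = i + 1 ∨ i = j + 1 then (3 : ℝ) else 4) * a i * a j

noncomputable def E (a : Fin n → ℝ) : ℝ := ∑ i, a i * a (i + 1)

noncomputable def S2 (a : Fin n → ℝ) : ℝ := ∑ i, (a i) ^ 2

lemma shift_sum (f : Fin n → ℝ) : ∑ i, f (i + 1) = ∑ i, f i :=
  Equiv.sum_comp (Equiv.addRight (1 : Fin n)) f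

lemma one_ne_zero' (hn : 3 ≤ n) : (1 : Fin n) ≠ 0 := by
  intro h
  have := congrArg Fin.val h
  rw [Fin.val_one'] at this
  simp at this
  omega

lemma add_one_ne (hn : 3 ≤ n) (i : Fin n) : i + 1 ≠ i := by
  intro h
  exact one_ne_zero' hn (add_eq_left.mp h)

lemma sub_one_ne (hn : 3 ≤ n) (i : Fin n) : i - 1 ≠ i := by
  intro h
  exact one_ne_zero' hn (sub_eq_self.mp h)

lemma not_both (hn : 3 ≤ n) (i j : Fin n) : ¬(j = i + 1 ∧ i = j + 1) := by
  rintro ⟨h1, h2⟩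
  rw [h2, add_assoc] at h1
  have h3 : (1 : Fin n) + 1 = 0 := (left_eq_add.mp h1)
  have := congrArg Fin.val h3
  rw [Fin.val_add, Fin.val_one'] at this
  rw [Nat.mod_eq_of_lt (show 1 < n by omega)] at this
  rw [Nat.mod_eq_of_lt (show 1 + 1 < n by omega)] at this
  simp at this

lemma sym_double (f : Fin n → Fin n → ℝ) (hf : ∀ i j, f i j = f j i) :
    2 * (∑ i, ∑ j ∈ Ioi i, f i j) = ∑ i, ∑ j ∈ univ.erase i, f i j := by
  have hswap : (∑ i, ∑ j ∈ Iio i, f i j) = ∑ i, ∑ j ∈ Ioi i, f i j := by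
    rw [Finset.sum_comm' (s' := fun y => Ioi y) (t' := univ)
      (by intro x y; simp [Finset.mem_Iio, Finset.mem_Ioi])]
    exact Finset.sum_congr rfl fun j _ => Finset.sum_congr rfl fun i _ => hf i j
  have hsplit : ∀ i : Fin n, (univ.erase i) = Iio i ∪ Ioi i := by
    intro i
    ext j
    simp only [mem_erase, mem_union, mem_Iio, mem_Ioi, mem_univ, and_true]
    constructor
    · intro h; exact lt_or_gt_of_ne h
    · rintro (h | h) <;> [exact ne_of_lt h; exact ne_of_gt h]
  have hdisj : ∀ i : Fin n, Disjoint (Iio i) (Ioi i) := by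
    intro i
    exact Finset.disjoint_left.mpr fun j h1 h2 => absurd (mem_Ioi.mp h2) (not_lt.mpr (le_of_lt (mem_Iio.mp h1)))
  calc 2 * (∑ i, ∑ j ∈ Ioi i, f i j)
      = (∑ i, ∑ j ∈ Iio i, f i j) + (∑ i, ∑ j ∈ Ioi i, f i j) := by rw [hswap]; ring
    _ = ∑ i, ((∑ j ∈ Iio i, f i j) + ∑ j ∈ Ioi i, f i j) := by rw [Finset.sum_add_distrib]
    _ = ∑ i, ∑ j ∈ univ.erase i, f i j := by
        refine Finset.sum_congr rfl fun i _ => ?_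
        rw [hsplit i, Finset.sum_union (hdisj i)]


lemma p_eq (hn : 3 ≤ n) (a : Fin n → ℝ) :
    p a = 2 * ((∑ i, a i) ^ 2 - S2 a) - E a := by
  set f : Fin n → Fin n → ℝ := fun i j =>
    (if j = i + 1 ∨ i = j + 1 then (3 : ℝ) else 4) * a i * a j with hf_def
  have hf : ∀ i j, f i j = f j i := by
    intro i j
    simp only [hf_def, or_comm]
    ring
  have h2p : 2 * p a = ∑ i, ∑ j ∈ univ.erase i, f i j := sym_double f hf
  have hpt : ∀ i j : Fin n, f i j = 4 * a i * a j -
      (if j = i + 1 then a i * a j else 0) - (if i = j + 1 then a i * a j else 0) := by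
    intro i j
    simp only [hf_def]
    by_cases h1 : j = i + 1 <;> by_cases h2 : i = j + 1
    · exact absurd ⟨h1, h2⟩ (not_both hn i j)
    · rw [if_pos (Or.inl h1), if_pos h1, if_neg h2]; ring
    · rw [if_pos (Or.inr h2), if_neg h1, if_pos h2]; ring
    · rw [if_neg (by tauto), if_neg h1, if_neg h2]; ring
  have hsum1 : ∑ i : Fin n, ∑ j ∈ univ.erase i, 4 * a i * a j
      = 4 * ((∑ i, a i) ^ 2 - S2 a) := by
    have h1 : ∀ i : Fin n, ∑ j ∈ univ.erase i, 4 * a i * a j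
        = a i * (4 * ∑ j, a j) - 4 * (a i) ^ 2 := by
      intro i
      rw [← Finset.mul_sum]
      have h0 := Finset.sum_erase_add univ a (Finset.mem_univ i)
      have h' : ∑ j ∈ univ.erase i, a j = (∑ j, a j) - a i := by linarith
      rw [h']; ring
    rw [Finset.sum_congr rfl fun i _ => h1 i, Finset.sum_sub_distrib,
      ← Finset.sum_mul, ← Finset.mul_sum]
    simp only [S2]
    ring
  have hsum2 : ∑ i : Fin n, ∑ j ∈ univ.erase i, (if j = i + 1 then a i * a j else 0)
      = E a := by
    have h1 : ∀ i : Fin n, ∑ j ∈ univ.erase i, (if j = i + 1 then a i * a j else 0)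
        = a i * a (i + 1) := by
      intro i
      rw [Finset.sum_ite_eq' (univ.erase i) (i + 1) (fun j => a i * a j),
        if_pos (Finset.mem_erase.mpr ⟨add_one_ne hn i, Finset.mem_univ _⟩)]
    rw [Finset.sum_congr rfl fun i _ => h1 i]
    rfl
  have hsum3 : ∑ i : Fin n, ∑ j ∈ univ.erase i, (if i = j + 1 then a i * a j else 0)
      = E a := by
    have h1 : ∀ i : Fin n, ∑ j ∈ univ.erase i, (if i = j + 1 then a i * a j else 0)
        = a i * a (i - 1) := by
      intro i
      have hcond : ∀ j : Fin n, (i = j + 1) = (j = i - 1) := by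
        intro j
        apply propext
        constructor
        · intro h; rw [h]; simp
        · intro h; rw [h]; simp
      simp only [hcond]
      rw [Finset.sum_ite_eq' (univ.erase i) (i - 1) (fun j => a i * a j),
        if_pos (Finset.mem_erase.mpr ⟨sub_one_ne hn i, Finset.mem_univ _⟩)]
    rw [Finset.sum_congr rfl fun i _ => h1 i]
    have h2 : ∀ i : Fin n, a (i + 1) * a (i + 1 - 1) = a (i + 1) * a i := by
      intro i; simp
    calc ∑ i : Fin n, a i * a (i - 1)
        = ∑ i : Fin n, a (i + 1) * a (i + 1 - 1) :=
          (shift_sum (fun i => a i * a (i - 1))).symm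
      _ = ∑ i : Fin n, a i * a (i + 1) := by
          rw [Finset.sum_congr rfl fun i _ => h2 i]
          exact Finset.sum_congr rfl fun i _ => mul_comm _ _
      _ = E a := rfl
  have hfin : 2 * p a = 4 * ((∑ i, a i) ^ 2 - S2 a) - E a - E a := by
    rw [h2p, Finset.sum_congr rfl fun i _ => Finset.sum_congr rfl fun j _ => hpt i j]
    simp only [Finset.sum_sub_distrib]
    rw [hsum1, hsum2, hsum3]
  linarith


lemma sum_const_real (c : ℝ) : ∑ _i : Fin n, c = (n : ℝ) * c := by
  rw [Finset.sum_const, Finset.card_univ, Fintype.card_fin, nsmul_eq_mul]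

lemma sq_expand (a : Fin n → ℝ) :
    ∑ i, (a i + a (i + 1)) ^ 2 = 2 * S2 a + 2 * E a := by
  have h1 : ∀ i : Fin n, (a i + a (i + 1)) ^ 2
      = (a i) ^ 2 + 2 * (a i * a (i + 1)) + (a (i + 1)) ^ 2 := fun i => by ring
  rw [Finset.sum_congr rfl fun i _ => h1 i, Finset.sum_add_distrib,
    Finset.sum_add_distrib, ← Finset.mul_sum, shift_sum (fun i => (a i) ^ 2)]
  simp only [S2, E]
  ring

lemma q_ge (a : Fin n → ℝ) : S2 a ≤ 2 * S2 a + E a := by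
  have h := sq_expand a
  have h2 : 0 ≤ ∑ i, (a i + a (i + 1)) ^ 2 :=
    Finset.sum_nonneg fun i _ => sq_nonneg _
  linarith

lemma S2_nonneg (a : Fin n → ℝ) : 0 ≤ S2 a :=
  Finset.sum_nonneg fun i _ => sq_nonneg _

lemma q_shift (a : Fin n → ℝ) (c : ℝ) :
    2 * S2 a + E a =
      (2 * S2 (fun i => a i - c) + E (fun i => a i - c))
        + 6 * c * (∑ i, a i) - 3 * (n : ℝ) * c ^ 2 := by
  have hS : S2 (fun i => a i - c) = S2 a - 2 * c * (∑ i, a i) + (n : ℝ) * c ^ 2 := by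
    simp only [S2]
    have h1 : ∀ i : Fin n, (a i - c) ^ 2 = (a i) ^ 2 - 2 * c * a i + c ^ 2 := fun i => by ring
    rw [Finset.sum_congr rfl fun i _ => h1 i, Finset.sum_add_distrib,
      Finset.sum_sub_distrib, ← Finset.mul_sum, sum_const_real]
  have hE : E (fun i => a i - c) = E a - 2 * c * (∑ i, a i) + (n : ℝ) * c ^ 2 := by
    simp only [E]
    have h1 : ∀ i : Fin n, (a i - c) * (a (i + 1) - c)
        = a i * a (i + 1) - c * a i - c * a (i + 1) + c ^ 2 := fun i => by ring
    rw [Finset.sum_congr rfl fun i _ => h1 i, Finset.sum_add_distrib,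
      Finset.sum_sub_distrib, Finset.sum_sub_distrib, ← Finset.mul_sum, ← Finset.mul_sum,
      shift_sum a, sum_const_real]
    ring
  rw [hS, hE]
  ring

lemma spike_sum (hn : 3 ≤ n) (α β : ℝ) :
    ∑ i : Fin n, (α + if i = 0 then β else 0) = (n : ℝ) * α + β := by
  rw [Finset.sum_add_distrib, sum_const_real,
    Finset.sum_ite_eq' univ (0 : Fin n) (fun _ => β), if_pos (Finset.mem_univ _)]

lemma spike_S2 (hn : 3 ≤ n) (α β : ℝ) :
    S2 (fun i : Fin n => α + if i = 0 then β else 0)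
      = (n : ℝ) * α ^ 2 + 2 * α * β + β ^ 2 := by
  simp only [S2]
  have h1 : ∀ i : Fin n, (α + if i = 0 then β else 0) ^ 2
      = α ^ 2 + (if i = 0 then 2 * α * β + β ^ 2 else 0) := by
    intro i
    by_cases h : i = 0 <;> simp [h] <;> ring
  rw [Finset.sum_congr rfl fun i _ => h1 i, Finset.sum_add_distrib, sum_const_real,
    Finset.sum_ite_eq' univ (0 : Fin n) (fun _ => 2 * α * β + β ^ 2),
    if_pos (Finset.mem_univ _)]
  ring

lemma spike_E (hn : 3 ≤ n) (α β : ℝ) :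
    E (fun i : Fin n => α + if i = 0 then β else 0)
      = (n : ℝ) * α ^ 2 + 2 * α * β := by
  simp only [E]
  set s : Fin n → ℝ := fun i => if i = 0 then β else 0 with hs_def
  have hzero : ∀ i : Fin n, s i * s (i + 1) = 0 := by
    intro i
    by_cases h : i = 0
    · have : i + 1 ≠ 0 := by rw [h, zero_add]; exact one_ne_zero' hn
      simp [hs_def, this]
    · simp [hs_def, h]
  have h1 : ∀ i : Fin n, (α + s i) * (α + s (i + 1))
      = α ^ 2 + α * s i + α * s (i + 1) + s i * s (i + 1) := fun i => by ring
  have hsum_s : ∑ i, s i = β := by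
    simp only [hs_def]
    rw [Finset.sum_ite_eq' univ (0 : Fin n) (fun _ => β), if_pos (Finset.mem_univ _)]
  calc ∑ i : Fin n, (α + s i) * (α + s (i + 1))
      = ∑ i : Fin n, (α ^ 2 + α * s i + α * s (i + 1) + s i * s (i + 1)) :=
        Finset.sum_congr rfl fun i _ => h1 i
    _ = (n : ℝ) * α ^ 2 + α * β + α * β + 0 := by
        rw [Finset.sum_add_distrib, Finset.sum_add_distrib, Finset.sum_add_distrib,
          sum_const_real, ← Finset.mul_sum, ← Finset.mul_sum,
          shift_sum s, hsum_s, Finset.sum_eq_zero fun i _ => hzero i]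
    _ = (n : ℝ) * α ^ 2 + 2 * α * β := by ring

end Stmt6Aux

set_option maxHeartbeats 1000000 in
open Stmt6Aux in
theorem stmt6 (n : ℕ) [NeZero n] (hn : 3 ≤ n) (η : ℝ) (hη : 0 < η) :
    let Q : Set (Fin n → ℝ) := {a | (∑ i : Fin n, ∑ j ∈ Finset.Ioi i,
        (if j = i + 1 ∨ i = j + 1 then (3 : ℝ) else 4) * a i * a j) = η ∧
        ∑ i, a i = 1 / 2}
    (η < 1 / 2 - 3 / (4 * (n : ℝ)) →
      IsCompact Q ∧ Q.Nonempty ∧ (Q ∩ {a | ∀ i, 0 < a i}).Nonempty) ∧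
    (η = 1 / 2 - 3 / (4 * (n : ℝ)) →
      Q = {(fun _ => 1 / (2 * (n : ℝ)) : Fin n → ℝ)} ∧ (0 : ℝ) < 1 / (2 * (n : ℝ))) ∧
    (η > 1 / 2 - 3 / (4 * (n : ℝ)) → Q = ∅) := by
  intro Q
  have hn0 : (3 : ℝ) ≤ (n : ℝ) := by exact_mod_cast hn
  have hnpos : (0 : ℝ) < (n : ℝ) := by linarith
  have hnne : (n : ℝ) ≠ 0 := ne_of_gt hnpos
  have hmem : ∀ a : Fin n → ℝ, a ∈ Q ↔ (p a = η ∧ ∑ i, a i = 1 / 2) := fun a => Iff.rfl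
  obtain ⟨c, hc_def⟩ : ∃ c : ℝ, c = 1 / (2 * (n : ℝ)) := ⟨_, rfl⟩
  -- key : for points on the hyperplane, q = 1/2 - p
  have key : ∀ a : Fin n → ℝ, (∑ i, a i) = 1 / 2 →
      2 * S2 a + E a = 1 / 2 - p a := by
    intro a h
    have := p_eq hn a
    rw [h] at this
    nlinarith [this]
  -- decomposition: q a = q w + 3/(4n)
  have qa_eq : ∀ a : Fin n → ℝ, (∑ i, a i) = 1 / 2 →
      2 * S2 a + E a =
        (2 * S2 (fun i => a i - c) + E (fun i => a i - c)) + 3 / (4 * (n : ℝ)) := by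
    intro a h
    have h1 := q_shift a c
    rw [h] at h1
    have h2 : 6 * c * (1 / 2) - 3 * (n : ℝ) * c ^ 2 = 3 / (4 * (n : ℝ)) := by
      rw [hc_def]; field_simp; ring
    linarith
  have qw_nonneg : ∀ a : Fin n → ℝ,
      0 ≤ 2 * S2 (fun i => a i - c) + E (fun i => a i - c) :=
    fun a => le_trans (S2_nonneg _) (q_ge _)
  refine ⟨?_, ?_, ?_⟩
  · -- part (a)
    intro hlt
    have hD : (0 : ℝ) < 1 / 2 - 3 / (4 * (n : ℝ)) := lt_trans hη hlt
    obtain ⟨t, ht0, ht1, ht2⟩ : ∃ t : ℝ, 0 < t ∧ t < 1 ∧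
        t ^ 2 * (1 / 2 - 3 / (4 * (n : ℝ))) = 1 / 2 - η - 3 / (4 * (n : ℝ)) := by
      have hδpos : (0 : ℝ) < 1 / 2 - η - 3 / (4 * (n : ℝ)) := by linarith
      have hratio : (0 : ℝ) < (1 / 2 - η - 3 / (4 * (n : ℝ))) / (1 / 2 - 3 / (4 * (n : ℝ))) :=
        div_pos hδpos hD
      have hsq := Real.sq_sqrt (le_of_lt hratio)
      refine ⟨Real.sqrt ((1 / 2 - η - 3 / (4 * (n : ℝ))) / (1 / 2 - 3 / (4 * (n : ℝ)))),
        Real.sqrt_pos.mpr hratio, ?_, ?_⟩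
      · have hlt1 : (1 / 2 - η - 3 / (4 * (n : ℝ))) / (1 / 2 - 3 / (4 * (n : ℝ))) < 1 :=
          (div_lt_one hD).mpr (by linarith)
        nlinarith [Real.sqrt_nonneg ((1 / 2 - η - 3 / (4 * (n : ℝ))) / (1 / 2 - 3 / (4 * (n : ℝ))))]
      · rw [hsq, div_mul_cancel₀ _ (ne_of_gt hD)]
    obtain ⟨α, hα_def⟩ : ∃ α : ℝ, α = (1 - t) / (2 * (n : ℝ)) := ⟨_, rfl⟩
    have hαpos : 0 < α := by rw [hα_def]; exact div_pos (by linarith) (by linarith)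
    obtain ⟨a, ha_def⟩ : ∃ a : Fin n → ℝ, a = fun i => α + if i = 0 then t / 2 else 0 :=
      ⟨_, rfl⟩
    have ha_sum : ∑ i, a i = 1 / 2 := by
      rw [ha_def, spike_sum hn, hα_def]
      field_simp
      ring
    have ha_p : p a = η := by
      rw [ha_def] at ha_sum ⊢
      rw [p_eq hn, ha_sum, spike_S2 hn, spike_E hn]
      have h3 : 2 * ((1 / 2 : ℝ) ^ 2 - ((n : ℝ) * α ^ 2 + 2 * α * (t / 2) + (t / 2) ^ 2))
          - ((n : ℝ) * α ^ 2 + 2 * α * (t / 2))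
          = 1 / 2 - 3 / (4 * (n : ℝ)) - t ^ 2 * (1 / 2 - 3 / (4 * (n : ℝ))) := by
        rw [hα_def]
        field_simp
        ring
      rw [h3, ht2]
      ring
    have ha_pos : ∀ i, 0 < a i := by
      intro i
      rw [ha_def]
      by_cases h : i = 0 <;> simp [h] <;> linarith
    have haQ : a ∈ Q := (hmem a).mpr ⟨ha_p, ha_sum⟩
    refine ⟨?_, ⟨a, haQ⟩, ⟨a, haQ, ha_pos⟩⟩
    -- compactness
    have hQ_closed : IsClosed Q := by
      have h1 : Continuous (fun a : Fin n → ℝ => p a) := by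
        apply continuous_finset_sum
        intro i _
        apply continuous_finset_sum
        intro j _
        exact (continuous_const.mul (continuous_apply i)).mul (continuous_apply j)
      have h2 : Continuous (fun a : Fin n → ℝ => ∑ i, a i) :=
        continuous_finset_sum _ fun i _ => continuous_apply i
      have hQeq : Q = {a : Fin n → ℝ | p a = η} ∩ {a : Fin n → ℝ | ∑ i, a i = 1 / 2} :=
        Set.setOf_and
      rw [hQeq]
      exact (isClosed_eq h1 continuous_const).inter (isClosed_eq h2 continuous_const)
    have hQ_bdd : Bornology.IsBounded Q := by
      apply (Metric.isBounded_closedBall (x := (0 : Fin n → ℝ)) (r := 1)).subset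
      intro b hb
      obtain ⟨hb1, hb2⟩ := (hmem b).mp hb
      have hq : 2 * S2 b + E b = 1 / 2 - η := by rw [key b hb2, hb1]
      have hS2 : S2 b ≤ 1 / 2 - η := by have := q_ge b; linarith
      rw [Metric.mem_closedBall, dist_zero_right]
      rw [pi_norm_le_iff_of_nonneg (by norm_num : (0:ℝ) ≤ 1)]
      intro i
      have hterm : (b i) ^ 2 ≤ S2 b :=
        Finset.single_le_sum (f := fun i => (b i) ^ 2) (fun j _ => sq_nonneg _)
          (Finset.mem_univ i)
      rw [Real.norm_eq_abs, abs_le]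
      constructor <;> nlinarith
    exact Metric.isCompact_of_isClosed_isBounded hQ_closed hQ_bdd
  · -- part (b)
    intro heq
    refine ⟨?_, div_pos one_pos (by linarith)⟩
    ext a
    rw [Set.mem_singleton_iff, hmem a]
    constructor
    · rintro ⟨h1, h2⟩
      have hq : 2 * S2 a + E a = 3 / (4 * (n : ℝ)) := by
        rw [key a h2, h1, heq]; ring
      have hq2 := qa_eq a h2
      have hS2w : S2 (fun i => a i - c) = 0 := by
        have hg := q_ge (fun i => a i - c)
        have hnn := S2_nonneg (fun i => a i - c)
        linarith
      funext i
      have hz : ∀ j ∈ Finset.univ, ((fun i => a i - c) j) ^ 2 = 0 := by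
        rw [← Finset.sum_eq_zero_iff_of_nonneg (fun j _ => sq_nonneg _)]
        exact hS2w
      have hzi : (a i - c) ^ 2 = 0 := hz i (Finset.mem_univ i)
      have h3 : a i - c = 0 := by nlinarith [hzi]
      rw [hc_def] at h3
      show a i = 1 / (2 * (n : ℝ))
      linarith
    · rintro rfl
      have hconst_eq : (fun _ : Fin n => 1 / (2 * (n : ℝ)))
          = (fun i : Fin n => 1 / (2 * (n : ℝ)) + if i = 0 then (0 : ℝ) else 0) := by
        funext i
        by_cases h : i = 0 <;> simp [h]
      rw [hconst_eq]
      constructor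
      · rw [p_eq hn, spike_sum hn, spike_S2 hn, spike_E hn, heq]
        field_simp
        ring
      · rw [spike_sum hn]
        field_simp
        try ring
  · -- part (c)
    intro hgt
    rw [Set.eq_empty_iff_forall_notMem]
    intro a ha
    obtain ⟨h1, h2⟩ := (hmem a).mp ha
    have hq : 2 * S2 a + E a = 1 / 2 - η := by rw [key a h2, h1]
    have hq2 := qa_eq a h2
    have h3 := qw_nonneg a
    linarith
end

section
/- Let n ≥ 4 and λ > 0. There is no vector a = (a_1,…,a_n) of positive reals such that the matrix A_nC_n (with A_n the diagonal matrix with diagonal a and C_n the periodic chain matrix) has the eigenvalue λ with algebraic multiplicity n−1 and the eigenvalue 0; that is, the resonance 1:1:⋯:1 does not occur for any mass distribution of the periodic FPU chain with n ≥ 4 particles. -/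
open Matrix Polynomial Finset


lemma trace_of_charpoly {n m : ℕ} (hn : n = m + 1) (N : Matrix (Fin n) (Fin n) ℝ) (mu : ℝ)
    (h : N.charpoly = X * (X - C mu) ^ m) : N.trace = m * mu := by
  haveI : Nonempty (Fin n) := by subst hn; exact ⟨0⟩
  have hc : Fintype.card (Fin n) = n := Fintype.card_fin n
  rw [Matrix.trace_eq_neg_charpoly_coeff, h, hc, hn, Nat.add_sub_cancel]
  rcases m with _ | k
  · simp
  · rw [sub_eq_add_neg, ← C_neg, coeff_X_mul, coeff_X_add_C_pow]
    simp [Nat.choose_succ_self_right]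
    ring


lemma charpoly_sq {n m : ℕ} (hn : n = m + 1) (M : Matrix (Fin n) (Fin n) ℝ) (mu : ℝ)
    (h : M.charpoly = X * (X - C mu) ^ m) :
    (M * M).charpoly = X * (X - C (mu ^ 2)) ^ m := by
  have hinj := Polynomial.expand_injective (R := ℝ) (n := 2) (by norm_num)
  apply hinj
  set N : Matrix (Fin n) (Fin n) ℝ[X] := M.map (C : ℝ → ℝ[X]) with hN
  have hcomm : scalar (Fin n) (X : ℝ[X]) * N = N * scalar (Fin n) X :=
    (scalar_commute (X : ℝ[X]) (fun r' => mul_comm _ _) N)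
  -- Step A : map of charmatrix under expand
  have stepA : (charmatrix (M * M)).map (⇑(Polynomial.expand ℝ 2)) =
      scalar (Fin n) ((X : ℝ[X]) ^ 2) - (M * M).map (C : ℝ → ℝ[X]) := by
    ext i j
    by_cases hij : i = j
    · subst hij
      simp [-Matrix.map_mul, charmatrix_apply, Matrix.map_apply, Matrix.scalar_apply,
        diagonal_apply, Polynomial.expand_X, Polynomial.expand_C]
    · simp [-Matrix.map_mul, charmatrix_apply, Matrix.map_apply, Matrix.scalar_apply,
        diagonal_apply, hij, Polynomial.expand_C]
  -- Step C : map of product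
  have stepC : (M * M).map (C : ℝ → ℝ[X]) = N * N := by
    have := RingHom.map_mul ((C : ℝ →+* ℝ[X]).mapMatrix) M M
    exact this
  -- Step B : factorization
  have stepB : scalar (Fin n) ((X : ℝ[X]) ^ 2) - N * N =
      charmatrix M * (scalar (Fin n) X + N) := by
    have hsq : scalar (Fin n) ((X : ℝ[X]) ^ 2) = scalar (Fin n) X * scalar (Fin n) X := by
      rw [sq]
      exact _root_.map_mul (Matrix.scalar (Fin n)) X X
    rw [hsq, charmatrix]
    show _ = (scalar (Fin n) X - N) * (scalar (Fin n) X + N)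
    rw [sub_mul, mul_add, mul_add, hcomm]
    abel
  -- first identity
  have key1 : Polynomial.expand ℝ 2 ((M * M).charpoly) =
      M.charpoly * det (scalar (Fin n) X + N) := by
    have := RingHom.map_det (Polynomial.expand ℝ 2 : ℝ[X] →ₐ[ℝ] ℝ[X]).toRingHom
      (charmatrix (M * M))
    rw [Matrix.charpoly, Matrix.charpoly, ← det_mul]
    rw [RingHom.mapMatrix_apply] at this
    rw [show ((Polynomial.expand ℝ 2 : ℝ[X] →ₐ[ℝ] ℝ[X]).toRingHom : ℝ[X] → ℝ[X]) =
      ⇑(Polynomial.expand ℝ 2) from rfl] at this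
    rw [this, stepA, stepC, stepB]
  -- determinant of scalar X + N
  have key2 : det (scalar (Fin n) X + N) = X * (X + C mu) ^ m := by
    have hmapdet := RingHom.map_det (Polynomial.aeval (-X : ℝ[X]) : ℝ[X] →ₐ[ℝ] ℝ[X]).toRingHom
      (charmatrix M)
    have hmapmat : (charmatrix M).map (⇑(Polynomial.aeval (-X : ℝ[X]))) =
        -(scalar (Fin n) X + N) := by
      ext i j
      by_cases hij : i = j
      · subst hij
        simp [-Matrix.map_mul, hN, charmatrix_apply, Matrix.map_apply, Matrix.scalar_apply,
          diagonal_apply, Matrix.neg_apply, Matrix.add_apply]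
        ring
      · simp [-Matrix.map_mul, hN, charmatrix_apply, Matrix.map_apply, Matrix.scalar_apply,
          diagonal_apply, hij, Matrix.neg_apply, Matrix.add_apply]
    rw [RingHom.mapMatrix_apply] at hmapdet
    rw [show ((Polynomial.aeval (-X : ℝ[X]) : ℝ[X] →ₐ[ℝ] ℝ[X]).toRingHom : ℝ[X] → ℝ[X]) =
      ⇑(Polynomial.aeval (-X : ℝ[X])) from rfl] at hmapdet
    rw [← Matrix.charpoly] at hmapdet
    rw [hmapmat, Matrix.det_neg, Fintype.card_fin, h] at hmapdet
    have hlhs : (Polynomial.aeval (-X : ℝ[X])) (X * (X - C mu) ^ m) =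
        (-1 : ℝ[X]) ^ n * (X * (X + C mu) ^ m) := by
      rw [_root_.map_mul, map_pow, map_sub, Polynomial.aeval_X, Polynomial.aeval_C]
      rw [show ((algebraMap ℝ ℝ[X]) mu : ℝ[X]) = C mu from rfl]
      rw [show (-X - C mu : ℝ[X]) = -(X + C mu) from by ring, neg_pow, hn]
      ring
    rw [hlhs] at hmapdet
    have hne : ((-1 : ℝ[X]) ^ n) ≠ 0 := by
      simp [pow_ne_zero]
    exact (mul_left_cancel₀ hne hmapdet).symm
  rw [key1, key2, h]
  rw [_root_.map_mul, map_pow, map_sub, Polynomial.expand_X, Polynomial.expand_C]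
  rw [show (X * (X - C mu) ^ m * (X * (X + C mu) ^ m) : ℝ[X]) =
    X ^ 2 * ((X - C mu) * (X + C mu)) ^ m from by rw [mul_pow]; ring]
  rw [show ((X - C mu) * (X + C mu) : ℝ[X]) = X ^ 2 - C (mu ^ 2) from by
    rw [map_pow]; ring]

theorem stmt7 (n : ℕ) [NeZero n] (hn : 4 ≤ n) (lam : ℝ) (hl : 0 < lam) :
    ¬ ∃ a : Fin n → ℝ, (∀ i, 0 < a i) ∧
      (Matrix.diagonal a * pchain n).charpoly = X * (X - C lam) ^ (n - 1) := by
  rintro ⟨a, ha, hchar⟩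
  -- Fin n arithmetic facts
  have hv1 : (1 : Fin n).val = 1 := by
    rw [Fin.val_one']; exact Nat.mod_eq_of_lt (by omega)
  have h1 : (1 : Fin n) ≠ 0 := by
    intro h; apply_fun Fin.val at h; rw [hv1, Fin.val_zero] at h; exact one_ne_zero h
  have h2 : (1 : Fin n) + 1 ≠ 0 := by
    intro h; apply_fun Fin.val at h
    rw [Fin.val_add, hv1, Fin.val_zero, Nat.mod_eq_of_lt (by omega)] at h
    omega
  have fa : ∀ i : Fin n, i + 1 ≠ i := by
    intro i h
    exact h1 (add_left_cancel (show i + 1 = i + 0 by rw [add_zero]; exact h))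
  have fb : ∀ i : Fin n, i - 1 ≠ i := by
    intro i h
    exact h1 (neg_eq_zero.mp (add_left_cancel
      (show i + (-1) = i + 0 by rw [add_zero, ← sub_eq_add_neg]; exact h)))
  have fc : ∀ i : Fin n, i + 1 ≠ i - 1 := by
    intro i h
    have h' : i + 1 = i + (-1) := by rw [← sub_eq_add_neg]; exact h
    have h'' : (1 : Fin n) = -1 := add_left_cancel h'
    exact h2 ((congrArg (· + 1) h'').trans (neg_add_cancel 1))
  set P := pchain n with hP
  set M := Matrix.diagonal a * P with hM
  obtain ⟨m, hm⟩ : ∃ m, n = m + 1 := ⟨n - 1, by omega⟩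
  have hm3 : 3 ≤ m := by omega
  rw [show n - 1 = m from by omega] at hchar
  have htr1 : M.trace = m * lam := trace_of_charpoly hm M lam hchar
  have htr2 : (M * M).trace = m * lam ^ 2 :=
    trace_of_charpoly hm (M * M) (lam ^ 2) (charpoly_sq hm M lam hchar)
  set s := ∑ i, a i with hs
  set q := ∑ i, a i * a i with hq
  set p := ∑ i, a i * a (i + 1) with hp
  have hMij : ∀ i j, M i j = a i * P i j := fun i j => Matrix.diagonal_mul a P i j
  have hPdiag : ∀ i : Fin n, P i i = 2 := by intro i; simp [hP, pchain]
  -- trace of M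
  have htrM : M.trace = 2 * s := by
    have : M.trace = ∑ i, M i i := rfl
    rw [this, Finset.sum_congr rfl fun i _ => by rw [hMij, hPdiag], hs, Finset.mul_sum]
    exact Finset.sum_congr rfl fun i _ => mul_comm (a i) 2
  -- entrywise description of M i j * M j i
  have hterm : ∀ i j, M i j * M j i =
      (if j = i then 4 * (a i * a i) else 0) + (if j = i + 1 then a i * a (i + 1) else 0) +
        (if j = i - 1 then a i * a (i - 1) else 0) := by
    intro i j
    rw [hMij, hMij]
    by_cases hc1 : j = i
    · subst hc1
      rw [if_pos rfl, if_neg (fun hh => fa j hh.symm), if_neg (fun hh => fb j hh.symm), hPdiag]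
      ring
    · rw [if_neg hc1]
      by_cases hc2 : j = i + 1
      · subst hc2
        rw [if_pos rfl, if_neg (fc i)]
        have e1 : P i (i + 1) = -1 := by simp [hP, pchain, Ne.symm (fa i)]
        have e2 : P (i + 1) i = -1 := by simp [hP, pchain, fa i]
        rw [e1, e2]; ring
      · rw [if_neg hc2]
        by_cases hc3 : j = i - 1
        · subst hc3
          rw [if_pos rfl]
          have e1 : P i (i - 1) = -1 := by
            simp [hP, pchain, Ne.symm (fb i), sub_add_cancel]
          have e2 : P (i - 1) i = -1 := by
            simp [hP, pchain, fb i, sub_add_cancel]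
          rw [e1, e2]; ring
        · have e1 : P i j = 0 := by
            have hx : i ≠ j := Ne.symm hc1
            have hy : ¬ (j = i + 1 ∨ i = j + 1) := by
              rintro (hh | hh)
              · exact hc2 hh
              · exact hc3 (by rw [hh]; exact (add_sub_cancel_right j 1).symm)
            simp [hP, pchain, hx, hy]
          rw [if_neg hc3, e1]; ring
  -- trace of M * M
  have htrMM : (M * M).trace = ∑ i, (4 * (a i * a i) + a i * a (i + 1) + a i * a (i - 1)) := by
    have : (M * M).trace = ∑ i, ∑ j, M i j * M j i := by
      refine Finset.sum_congr rfl fun i _ => ?_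
      exact Matrix.mul_apply
    rw [this]
    refine Finset.sum_congr rfl fun i _ => ?_
    rw [Finset.sum_congr rfl fun j _ => hterm i j, Finset.sum_add_distrib,
      Finset.sum_add_distrib, Finset.sum_ite_eq' univ i, Finset.sum_ite_eq' univ (i + 1),
      Finset.sum_ite_eq' univ (i - 1)]
    simp
  -- reindexing identities
  have hq1 : ∑ i, a (i + 1) * a (i + 1) = q := by
    rw [hq]
    exact Fintype.sum_equiv (Equiv.addRight (1 : Fin n))
      (fun i => a (i + 1) * a (i + 1)) (fun i => a i * a i) (fun x => rfl)
  have hreidx : ∑ i, a i * a (i - 1) = p := by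
    have h1' : ∑ i, a i * a (i - 1) = ∑ i, a (i + 1) * a i :=
      Fintype.sum_equiv (Equiv.addRight (-1 : Fin n))
        (fun i => a i * a (i - 1)) (fun i => a (i + 1) * a i)
        (fun x => by simp [sub_eq_add_neg])
    rw [h1', hp]
    exact Finset.sum_congr rfl fun i _ => mul_comm _ _
  have hreidx2 : ∑ i, (a i - a (i - 1)) ^ 2 = ∑ i, (a i - a (i + 1)) ^ 2 := by
    have h1' : ∑ i, (a i - a (i - 1)) ^ 2 = ∑ i, (a (i + 1) - a i) ^ 2 :=
      Fintype.sum_equiv (Equiv.addRight (-1 : Fin n))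
        (fun i => (a i - a (i - 1)) ^ 2) (fun i => (a (i + 1) - a i) ^ 2)
        (fun x => by simp [sub_eq_add_neg])
    rw [h1']
    exact Finset.sum_congr rfl fun i _ => by ring
  -- expansion of cyclic difference sum
  have hexp : ∑ i, (a i - a (i + 1)) ^ 2 = 2 * q - 2 * p := by
    rw [Finset.sum_congr rfl fun i (_ : i ∈ univ) =>
      (show (a i - a (i + 1)) ^ 2
          = a i * a i + a (i + 1) * a (i + 1) - 2 * (a i * a (i + 1)) from by ring),
      Finset.sum_sub_distrib, Finset.sum_add_distrib, hq1, ← Finset.mul_sum, ← hq, ← hp]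
    ring
  -- the two trace equalities in terms of s, q, p
  have e1 : 2 * s = (m : ℝ) * lam := by rw [← htrM, htr1]
  have e2 : 4 * q + 2 * p = (m : ℝ) * lam ^ 2 := by
    rw [← htr2, htrMM, Finset.sum_add_distrib, Finset.sum_add_distrib, ← Finset.mul_sum,
      ← hq, ← hp, hreidx]
    ring
  -- positivity
  haveI : Nonempty (Fin n) := ⟨⟨0, by omega⟩⟩
  have hppos : 0 < p :=
    Finset.sum_pos (fun i _ => mul_pos (ha i) (ha (i + 1))) univ_nonempty
  have hqpos : 0 < q :=
    Finset.sum_pos (fun i _ => mul_pos (ha i) (ha i)) univ_nonempty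
  have hqp : p ≤ q := by
    have h0 : (0 : ℝ) ≤ ∑ i, (a i - a (i + 1)) ^ 2 :=
      Finset.sum_nonneg fun i _ => sq_nonneg _
    rw [hexp] at h0; linarith
  -- the full double sum
  have hsumfull : ∑ i : Fin n, ∑ j : Fin n, (a i - a j) ^ 2
      = 2 * (n : ℝ) * q - 2 * s ^ 2 := by
    have hin : ∀ i, ∑ j, (a i - a j) ^ 2 = (n : ℝ) * (a i * a i) + q - 2 * s * a i := by
      intro i
      rw [Finset.sum_congr rfl fun j (_ : j ∈ univ) =>
        (show (a i - a j) ^ 2 = a i * a i + a j * a j - 2 * (a i * a j) from by ring),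
        Finset.sum_sub_distrib, Finset.sum_add_distrib, Finset.sum_const, Finset.card_univ,
        Fintype.card_fin, ← Finset.mul_sum, ← hq, ← Finset.mul_sum, ← hs, nsmul_eq_mul]
      ring
    rw [Finset.sum_congr rfl fun i (_ : i ∈ univ) => hin i, Finset.sum_sub_distrib,
      Finset.sum_add_distrib, Finset.sum_const, Finset.card_univ, Fintype.card_fin,
      ← Finset.mul_sum, ← hq, ← Finset.mul_sum, ← hs, nsmul_eq_mul]
    ring
  -- the neighbor terms are a sub-sum of the full inner sum
  have hsub : ∀ i : Fin n, (a i - a (i + 1)) ^ 2 + (a i - a (i - 1)) ^ 2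
      ≤ ∑ j, (a i - a j) ^ 2 := by
    intro i
    have hpair : ∑ j ∈ ({i + 1, i - 1} : Finset (Fin n)), (a i - a j) ^ 2
        = (a i - a (i + 1)) ^ 2 + (a i - a (i - 1)) ^ 2 := Finset.sum_pair (fc i)
    rw [← hpair]
    exact Finset.sum_le_sum_of_subset_of_nonneg (Finset.subset_univ _)
      (fun j _ _ => sq_nonneg _)
  have hkey : 2 * (2 * q - 2 * p) ≤ 2 * (n : ℝ) * q - 2 * s ^ 2 := by
    have hh := Finset.sum_le_sum (fun i (_ : i ∈ (univ : Finset (Fin n))) => hsub i)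
    rw [hsumfull] at hh
    have hh2 : ∑ i, ((a i - a (i + 1)) ^ 2 + (a i - a (i - 1)) ^ 2)
        = (2 * q - 2 * p) + (2 * q - 2 * p) := by
      rw [Finset.sum_add_distrib, hexp, hreidx2, hexp]
    rw [hh2] at hh
    linarith
  -- final contradiction
  have hn' : (n : ℝ) = (m : ℝ) + 1 := by rw [hm]; push_cast; ring
  rw [hn'] at hkey
  have hm3' : (3 : ℝ) ≤ (m : ℝ) := by exact_mod_cast hm3
  have heq : 4 * s ^ 2 = (m : ℝ) * (4 * q + 2 * p) := by
    calc 4 * s ^ 2 = (2 * s) ^ 2 := by ring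
      _ = ((m : ℝ) * lam) ^ 2 := by rw [e1]
      _ = (m : ℝ) * ((m : ℝ) * lam ^ 2) := by ring
      _ = (m : ℝ) * (4 * q + 2 * p) := by rw [e2]
  nlinarith [mul_nonneg (sub_nonneg.mpr hm3') hppos.le, hkey, hqp, hqpos, hppos]
end

section
/- For (ξ,η) ∈ ℝ_{>0}², define the fiber of (ξ,η) as the set of (a_1,a_2,a_3,a_4) ∈ ℝ_{>0}^4 satisfying 4(a_1a_2a_3 + a_2a_3a_4 + a_3a_4a_1 + a_4a_1a_2) = ξ, 3(a_1a_2 + a_2a_3 + a_3a_4 + a_4a_1) + 4(a_1a_3 + a_2a_4) = η, and 2(a_1 + a_2 + a_3 + a_4) = 1. Then the fiber of (ξ,η) is nonempty if and only if 0 < ξ ≤ 1/32, 0 < η ≤ 2ξ + 1/4, and T(ξ,η) ≤ 0, where T(ξ,η) = 27ξ² + 4η³ − 18ξη − η² + 4ξ. -/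
private lemma contf (η ξ : ℝ) : Continuous fun x : ℝ => x^3 - x^2 + η*x - ξ :=
  Continuous.sub (Continuous.add (Continuous.sub (continuous_pow 3) (continuous_pow 2))
    (continuous_const.mul continuous_id)) continuous_const

private lemma Tfact (ξ η lam : ℝ) (hroot : lam^3 - lam^2 + η*lam - ξ = 0)
    (hdisc : 0 ≤ (lam-1)^2 - 4*(η - lam + lam^2)) :
    27 * ξ ^ 2 + 4 * η ^ 3 - 18 * ξ * η - η ^ 2 + 4 * ξ ≤ 0 := by
  have hx : ξ = lam * (η - lam + lam^2) := by linear_combination -hroot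
  have key : 27 * ξ ^ 2 + 4 * η ^ 3 - 18 * ξ * η - η ^ 2 + 4 * ξ
      = -(((lam-1)^2 - 4*(η - lam + lam^2)) * (lam^2 + (lam-1)*lam + (η - lam + lam^2))^2) := by
    rw [hx]; ring
  rw [key]
  have h2 := sq_nonneg (lam^2 + (lam-1)*lam + (η - lam + lam^2))
  nlinarith [mul_nonneg hdisc h2]

private lemma fwdT (ξ η p q : ℝ) (hξ : 0 < ξ) (hη5 : η ≤ 5/16) (hp : 0 < p)
    (hpq : p + q = 1/2) (hle : p ≤ q)
    (hfp : 0 ≤ p^3 - p^2 + η*p - ξ) (hfq : q^3 - q^2 + η*q - ξ ≤ 0) :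
    27 * ξ ^ 2 + 4 * η ^ 3 - 18 * ξ * η - η ^ 2 + 4 * ξ ≤ 0 := by
  rcases eq_or_lt_of_le hle with heq | hlt
  · subst heq
    have hq4 : p = 1/4 := by linarith
    subst hq4
    have hroot : (1/4:ℝ)^3 - (1/4:ℝ)^2 + η*(1/4) - ξ = 0 := le_antisymm hfq hfp
    exact Tfact ξ η (1/4) hroot (by nlinarith)
  · have hc : ContinuousOn (fun x : ℝ => x^3 - x^2 + η*x - ξ) (Set.Icc 0 p) :=
      (contf η ξ).continuousOn
    have h0mem : (0:ℝ) ∈ Set.Icc ((fun x : ℝ => x^3 - x^2 + η*x - ξ) 0)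
        ((fun x : ℝ => x^3 - x^2 + η*x - ξ) p) := by
      constructor
      · show (0:ℝ)^3 - 0^2 + η*0 - ξ ≤ 0
        nlinarith
      · show (0:ℝ) ≤ p^3 - p^2 + η*p - ξ
        exact hfp
    obtain ⟨lam, hlam, hfl⟩ := intermediate_value_Icc hp.le hc h0mem
    have hfl' : lam^3 - lam^2 + η*lam - ξ = 0 := hfl
    have hlamq : lam < q := lt_of_le_of_lt hlam.2 hlt
    have hfac : q^3 - q^2 + η*q - ξ = (q - lam) * (q^2 + (lam-1)*q + (η - lam + lam^2)) := by
      linear_combination hfl'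
    have hg : q^2 + (lam-1)*q + (η - lam + lam^2) ≤ 0 := by
      by_contra hpos
      push_neg at hpos
      nlinarith [mul_pos (sub_pos.2 hlamq) hpos]
    exact Tfact ξ η lam hfl' (by nlinarith [sq_nonneg (2*q + lam - 1)])

set_option maxHeartbeats 1000000 in
theorem stmt9 (ξ η : ℝ) (hξ : 0 < ξ) (hη : 0 < η) :
    (∃ a1 a2 a3 a4 : ℝ, 0 < a1 ∧ 0 < a2 ∧ 0 < a3 ∧ 0 < a4 ∧
      4 * (a1 * a2 * a3 + a2 * a3 * a4 + a3 * a4 * a1 + a4 * a1 * a2) = ξ ∧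
      3 * (a1 * a2 + a2 * a3 + a3 * a4 + a4 * a1) + 4 * (a1 * a3 + a2 * a4) = η ∧
      2 * (a1 + a2 + a3 + a4) = 1) ↔
    (ξ ≤ 1 / 32 ∧ η ≤ 2 * ξ + 1 / 4 ∧
      27 * ξ ^ 2 + 4 * η ^ 3 - 18 * ξ * η - η ^ 2 + 4 * ξ ≤ 0) := by
  constructor
  · rintro ⟨a1, a2, a3, a4, h1, h2, h3, h4, hxi, heta, hsum⟩
    have ha4 : a4 = 1/2 - a1 - a2 - a3 := by linarith
    subst ha4
    have hA : ξ ≤ 1/32 := by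
      have hid : 1/32 - ξ = (a2 + (1/2 - a1 - a2 - a3))*(a1-a3)^2
          + (a1+a3)*(a2-(1/2 - a1 - a2 - a3))^2
          + ((a1+a3)-(a2+(1/2 - a1 - a2 - a3)))^2/8 := by
        rw [← hxi]; ring
      nlinarith [mul_nonneg (by linarith : (0:ℝ) ≤ a2 + (1/2 - a1 - a2 - a3)) (sq_nonneg (a1-a3)),
        mul_nonneg (by linarith : (0:ℝ) ≤ a1+a3) (sq_nonneg (a2-(1/2 - a1 - a2 - a3))),
        sq_nonneg ((a1+a3)-(a2+(1/2 - a1 - a2 - a3)))]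
    have hB : η ≤ 2*ξ + 1/4 := by
      have hid : 1/4 + 2*ξ - η = 2*(a1+a3)*(a1-a3)^2
          + 2*(a2 + (1/2 - a1 - a2 - a3))*(a2-(1/2 - a1 - a2 - a3))^2 := by
        rw [← hxi, ← heta]; ring
      nlinarith [mul_nonneg (by linarith : (0:ℝ) ≤ a1+a3) (sq_nonneg (a1-a3)),
        mul_nonneg (by linarith : (0:ℝ) ≤ a2 + (1/2 - a1 - a2 - a3)) (sq_nonneg (a2-(1/2 - a1 - a2 - a3)))]
    refine ⟨hA, by linarith, ?_⟩
    have hη5 : η ≤ 5/16 := by linarith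
    have hfp : (a1+a3)^3 - (a1+a3)^2 + η*(a1+a3) - ξ
        = ((a2+(1/2 - a1 - a2 - a3)) - (a1+a3))*(a1-a3)^2 := by
      rw [← hxi, ← heta]; ring
    have hfq : (a2+(1/2 - a1 - a2 - a3))^3 - (a2+(1/2 - a1 - a2 - a3))^2
        + η*(a2+(1/2 - a1 - a2 - a3)) - ξ
        = ((a1+a3) - (a2+(1/2 - a1 - a2 - a3)))*(a2-(1/2 - a1 - a2 - a3))^2 := by
      rw [← hxi, ← heta]; ring
    rcases le_total (a1+a3) (a2+(1/2 - a1 - a2 - a3)) with hle | hle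
    · refine fwdT ξ η (a1+a3) (a2+(1/2 - a1 - a2 - a3)) hξ hη5 (by linarith) (by ring) hle ?_ ?_
      · rw [hfp]
        exact mul_nonneg (by linarith) (sq_nonneg _)
      · rw [hfq]
        exact mul_nonpos_of_nonpos_of_nonneg (by linarith) (sq_nonneg _)
    · refine fwdT ξ η (a2+(1/2 - a1 - a2 - a3)) (a1+a3) hξ hη5 (by linarith) (by ring) hle ?_ ?_
      · rw [hfq]
        exact mul_nonneg (by linarith) (sq_nonneg _)
      · rw [hfp]
        exact mul_nonpos_of_nonpos_of_nonneg (by linarith) (sq_nonneg _)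
  · rintro ⟨hA, hB, hT⟩
    have hη5 : η ≤ 5/16 := by linarith
    obtain ⟨s, hs0, hs2⟩ : ∃ s : ℝ, 0 ≤ s ∧ s^2 = 1 - 3*η :=
      ⟨Real.sqrt (1 - 3*η), Real.sqrt_nonneg _, Real.sq_sqrt (by linarith)⟩
    have hs1 : s < 1 := by nlinarith
    have hs4 : 1/4 ≤ s := by nlinarith
    have hηr : η = (1 - s^2)/3 := by linarith
    have hkey : 27 * (((1-s)/3)^3 - ((1-s)/3)^2 + η*((1-s)/3) - ξ)
        * (((1+s)/3)^3 - ((1+s)/3)^2 + η*((1+s)/3) - ξ)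
        = 27*ξ^2 + 4*η^3 - 18*ξ*η - η^2 + 4*ξ := by
      rw [hηr]; ring
    have hdiff : (((1-s)/3)^3 - ((1-s)/3)^2 + η*((1-s)/3) - ξ)
        - (((1+s)/3)^3 - ((1+s)/3)^2 + η*((1+s)/3) - ξ) = 4/27 * s^3 := by
      rw [hηr]; ring
    have hfxm : 0 ≤ ((1-s)/3)^3 - ((1-s)/3)^2 + η*((1-s)/3) - ξ := by
      by_contra hneg
      push_neg at hneg
      have hs3 : 0 ≤ s^3 := pow_nonneg hs0 3
      have hfxp : (((1+s)/3)^3 - ((1+s)/3)^2 + η*((1+s)/3) - ξ) < 0 := by nlinarith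
      nlinarith [mul_pos (neg_pos.2 hneg) (neg_pos.2 hfxp)]
    have hxm0 : (0:ℝ) ≤ (1-s)/3 := by linarith
    have hxm4 : (1-s)/3 ≤ 1/4 := by linarith
    have hc : ContinuousOn (fun x : ℝ => x^3 - x^2 + η*x - ξ) (Set.Icc 0 ((1-s)/3)) :=
      (contf η ξ).continuousOn
    have h0mem : (0:ℝ) ∈ Set.Icc ((fun x : ℝ => x^3 - x^2 + η*x - ξ) 0)
        ((fun x : ℝ => x^3 - x^2 + η*x - ξ) ((1-s)/3)) := by
      constructor
      · show (0:ℝ)^3 - 0^2 + η*0 - ξ ≤ 0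
        nlinarith
      · show (0:ℝ) ≤ ((1-s)/3)^3 - ((1-s)/3)^2 + η*((1-s)/3) - ξ
        exact hfxm
    obtain ⟨q, hqmem, hfq⟩ := intermediate_value_Icc hxm0 hc h0mem
    have hroot : q^3 - q^2 + η*q - ξ = 0 := hfq
    clear hkey hdiff hfxm hc h0mem hfq hηr
    have hqx : q ≤ (1-s)/3 := hqmem.2
    have hq4 : q ≤ 1/4 := le_trans hqx hxm4
    have hq0 : 0 < q := by
      rcases lt_or_eq_of_le hqmem.1 with h | h
      · exact h
      · exfalso
        rw [← h] at hroot
        nlinarith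
    have h13q : s ≤ 1 - 3*q := by linarith
    have hder : 0 ≤ 3*q^2 - 2*q + η := by nlinarith [mul_le_mul h13q h13q hs0 (by linarith : (0:ℝ) ≤ 1 - 3*q)]
    have h12 : (1/2 - q) * (1/4 + q/2 - q^2 - η) = 1/8 + ξ - η/2 := by
      linear_combination hroot
    have hD : η ≤ 1/4 + q/2 - q^2 := by
      by_contra hcon
      push_neg at hcon
      nlinarith [mul_pos (show (0:ℝ) < 1/2 - q by linarith)
        (show (0:ℝ) < η - (1/4 + q/2 - q^2) by linarith)]
    have hu0 : 0 < η - 3*(1/2-q)*q - q^2 := by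
      nlinarith [mul_pos hq0 (show (0:ℝ) < 1/2 - q by linarith)]
    have hinner : 0 ≤ (1/2-q)^2 + 3*(1/2-q)*q + q^2 - η := by nlinarith
    obtain ⟨r, hr0, hr2⟩ : ∃ r : ℝ, 0 ≤ r ∧ r^2 = (1/2-q)^2 + 3*(1/2-q)*q + q^2 - η :=
      ⟨Real.sqrt _, Real.sqrt_nonneg _, Real.sq_sqrt hinner⟩
    have hrlt : r < 1/2 - q := by
      by_contra hcon
      push_neg at hcon
      have h1 : (1/2-q)*(1/2-q) ≤ r*r := mul_le_mul hcon hcon (by linarith) hr0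
      nlinarith [hr2, hu0, h1]
    refine ⟨((1/2-q)+r)/2, q/2, ((1/2-q)-r)/2, q/2, by linarith, by linarith, by linarith,
      by linarith, ?_, ?_, by ring⟩
    · linear_combination (-q)*hr2 + hroot
    · linear_combination -hr2
end

section
/- Let A_4 be a diagonal matrix with positive diagonal entries a_1, a_2, a_3, a_4 and let C_4 be the periodic chain matrix for n = 4. Let λ be an eigenvalue of A_4C_4 such that λ ≠ 2a_j for all 1 ≤ j ≤ 4, and put μ_j = 1/(2 − λ/a_j). Then the nonzero vector (μ_1(μ_2 + μ_4), μ_2, μ_3(μ_2 + μ_4), μ_4) is an eigenvector of A_4C_4 for the eigenvalue λ. -/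
open Matrix Polynomial

theorem stmt11 (a : Fin 4 → ℝ) (ha : ∀ i, 0 < a i) (lam : ℝ)
    (hev : ∃ v : Fin 4 → ℝ, v ≠ 0 ∧ (Matrix.diagonal a * pchain 4).mulVec v = lam • v)
    (hne : ∀ j, lam ≠ 2 * a j) :
    let μ : Fin 4 → ℝ := fun j => (2 - lam / a j)⁻¹
    let w : Fin 4 → ℝ := ![μ 0 * (μ 1 + μ 3), μ 1, μ 2 * (μ 1 + μ 3), μ 3]
    w ≠ 0 ∧ (Matrix.diagonal a * pchain 4).mulVec w = lam • w := by
  intro μ w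
  obtain ⟨v, hv0, hv⟩ := hev
  have ha' : ∀ j, a j ≠ 0 := fun j => (ha j).ne'
  have hd : ∀ j, (2 * a j - lam) ≠ 0 := fun j => sub_ne_zero.mpr fun h => hne j h.symm
  have key : ∀ j, (2 * a j - lam) * μ j = a j := by
    intro j
    have hb : (2 : ℝ) - lam / a j = (2 * a j - lam) / a j := by
      rw [eq_div_iff (ha' j), sub_mul, div_mul_cancel₀ _ (ha' j)]
    show (2 * a j - lam) * (2 - lam / a j)⁻¹ = a j
    rw [hb, div_eq_mul_inv, mul_inv, ← mul_assoc, mul_inv_cancel₀ (hd j), one_mul, inv_inv]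
  have hμne : ∀ j, μ j ≠ 0 := by
    intro j h
    have := key j
    rw [h, mul_zero] at this
    exact ha' j this.symm
  have e0 := congrFun hv 0
  have e1 := congrFun hv 1
  have e2 := congrFun hv 2
  have e3 := congrFun hv 3
  simp [Matrix.mulVec, Matrix.mul_apply, Fin.sum_univ_four, pchain,
    Matrix.diagonal_apply, dotProduct] at e0 e1 e2 e3
  have f0 : v 0 = μ 0 * (v 1 + v 3) :=
    mul_left_cancel₀ (ha' 0) (by linear_combination μ 0 * e0 - v 0 * key 0 :
      a 0 * v 0 = a 0 * (μ 0 * (v 1 + v 3)))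
  have f1 : v 1 = μ 1 * (v 0 + v 2) :=
    mul_left_cancel₀ (ha' 1) (by linear_combination μ 1 * e1 - v 1 * key 1 :
      a 1 * v 1 = a 1 * (μ 1 * (v 0 + v 2)))
  have f2 : v 2 = μ 2 * (v 1 + v 3) :=
    mul_left_cancel₀ (ha' 2) (by linear_combination μ 2 * e2 - v 2 * key 2 :
      a 2 * v 2 = a 2 * (μ 2 * (v 1 + v 3)))
  have f3 : v 3 = μ 3 * (v 0 + v 2) :=
    mul_left_cancel₀ (ha' 3) (by linear_combination μ 3 * e3 - v 3 * key 3 :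
      a 3 * v 3 = a 3 * (μ 3 * (v 0 + v 2)))
  have ht : v 1 + v 3 ≠ 0 := by
    intro h
    have h0 : v 0 = 0 := by rw [f0, h, mul_zero]
    have h2 : v 2 = 0 := by rw [f2, h, mul_zero]
    have h1 : v 1 = 0 := by rw [f1, h0, h2]; ring
    have h3 : v 3 = 0 := by rw [f3, h0, h2]; ring
    apply hv0
    funext i
    fin_cases i <;> assumption
  have K : (μ 0 + μ 2) * (μ 1 + μ 3) = 1 := by
    have h : ((μ 0 + μ 2) * (μ 1 + μ 3)) * (v 1 + v 3) = 1 * (v 1 + v 3) := by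
      linear_combination (-1 : ℝ) * f1 - f3 - (μ 1 + μ 3) * f0 - (μ 1 + μ 3) * f2
    exact mul_right_cancel₀ ht h
  constructor
  · intro h
    exact hμne 1 (by simpa [w] using congrFun h 1)
  · funext i
    fin_cases i <;>
      simp [Matrix.mulVec, Matrix.mul_apply, Fin.sum_univ_four, pchain,
        Matrix.diagonal_apply, dotProduct, w]
    · linear_combination (μ 1 + μ 3) * key 0
    · linear_combination key 1 - a 1 * K
    · linear_combination (μ 1 + μ 3) * key 2
    · linear_combination key 3 - a 3 * K
end

section
/- Let ε and d_6 be real constants and consider the system of ODEs on the domain r_1, r_2, r_3 > 0: ṙ_1 = ε(7/6)d_6 r_2 r_3 sin χ, ṙ_2 = −ε(7/4)d_6 r_1 r_3 sin χ, ṙ_3 = −ε(7/2)d_6 r_1 r_2 sin χ, χ̇ = ε(7/2)d_6 (cos χ/(r_1 r_2 r_3)) ( r_2²r_3²/3 − r_1²r_3²/2 − r_1²r_2² ). Then along every solution both quantities 9r_1² + 4r_2² + r_3² and 2r_2² − r_3² are constant in time; together with the Hamiltonian this makes the normal form integrable. -/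
/-! Both quantities are quadratic forms in `r` whose derivatives along the flow are multiples of
`r₁ r₂ r₃ ε d₆ sin χ` with coefficients `9·2·7/6 - 4·2·7/4 - 2·7/2 = 0` and
`2·2·(-7/4) + 2·7/2 = 0`. -/

theorem eq_of_forall_hasDerivAt_zero {𝕜 G : Type*} [RCLike 𝕜] [NormedAddCommGroup G]
    [NormedSpace 𝕜 G] {f : 𝕜 → G} (hf : ∀ x, HasDerivAt f 0 x) (x y : 𝕜) : f x = f y :=
  is_const_of_deriv_eq_zero (fun x => (hf x).differentiableAt) (fun x => (hf x).deriv) x y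

section FPUNormalForm

variable {ε d6 : ℝ} {r1 r2 r3 χ : ℝ → ℝ} {t : ℝ}

theorem hasDerivAt_weighted_norm_sq_zero
    (h1 : HasDerivAt r1 (ε * (7 / 6) * d6 * r2 t * r3 t * Real.sin (χ t)) t)
    (h2 : HasDerivAt r2 (-(ε * (7 / 4) * d6 * r1 t * r3 t * Real.sin (χ t))) t)
    (h3 : HasDerivAt r3 (-(ε * (7 / 2) * d6 * r1 t * r2 t * Real.sin (χ t))) t) :
    HasDerivAt (fun t => 9 * (r1 t) ^ 2 + 4 * (r2 t) ^ 2 + (r3 t) ^ 2) 0 t := by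
  refine ((((h1.pow 2).const_mul 9).add ((h2.pow 2).const_mul 4)).add (h3.pow 2)).congr_deriv ?_
  norm_num only
  ring

theorem hasDerivAt_sq_sub_sq_zero
    (h2 : HasDerivAt r2 (-(ε * (7 / 4) * d6 * r1 t * r3 t * Real.sin (χ t))) t)
    (h3 : HasDerivAt r3 (-(ε * (7 / 2) * d6 * r1 t * r2 t * Real.sin (χ t))) t) :
    HasDerivAt (fun t => 2 * (r2 t) ^ 2 - (r3 t) ^ 2) 0 t := by
  refine (((h2.pow 2).const_mul 2).sub (h3.pow 2)).congr_deriv ?_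
  norm_num only
  ring

end FPUNormalForm

theorem stmt16_general (ε d6 : ℝ) (r1 r2 r3 χ : ℝ → ℝ)
    (h1 : ∀ t, HasDerivAt r1 (ε * (7 / 6) * d6 * r2 t * r3 t * Real.sin (χ t)) t)
    (h2 : ∀ t, HasDerivAt r2 (-(ε * (7 / 4) * d6 * r1 t * r3 t * Real.sin (χ t))) t)
    (h3 : ∀ t, HasDerivAt r3 (-(ε * (7 / 2) * d6 * r1 t * r2 t * Real.sin (χ t))) t) :
    ∀ t s : ℝ,
      9 * (r1 t) ^ 2 + 4 * (r2 t) ^ 2 + (r3 t) ^ 2 =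
        9 * (r1 s) ^ 2 + 4 * (r2 s) ^ 2 + (r3 s) ^ 2 ∧
      2 * (r2 t) ^ 2 - (r3 t) ^ 2 = 2 * (r2 s) ^ 2 - (r3 s) ^ 2 := fun t s =>
  ⟨eq_of_forall_hasDerivAt_zero
      (fun t => hasDerivAt_weighted_norm_sq_zero (h1 t) (h2 t) (h3 t)) t s,
    eq_of_forall_hasDerivAt_zero (fun t => hasDerivAt_sq_sub_sq_zero (h2 t) (h3 t)) t s⟩

theorem stmt16 (ε d6 : ℝ) (r1 r2 r3 χ : ℝ → ℝ)
    (hpos : ∀ t, 0 < r1 t ∧ 0 < r2 t ∧ 0 < r3 t)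
    (h1 : ∀ t, HasDerivAt r1 (ε * (7 / 6) * d6 * r2 t * r3 t * Real.sin (χ t)) t)
    (h2 : ∀ t, HasDerivAt r2 (-(ε * (7 / 4) * d6 * r1 t * r3 t * Real.sin (χ t))) t)
    (h3 : ∀ t, HasDerivAt r3 (-(ε * (7 / 2) * d6 * r1 t * r2 t * Real.sin (χ t))) t)
    (h4 : ∀ t, HasDerivAt χ
      (ε * (7 / 2) * d6 * (Real.cos (χ t) / (r1 t * r2 t * r3 t)) *
        ((r2 t) ^ 2 * (r3 t) ^ 2 / 3 - (r1 t) ^ 2 * (r3 t) ^ 2 / 2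
          - (r1 t) ^ 2 * (r2 t) ^ 2)) t) :
    ∀ t s : ℝ,
      9 * (r1 t) ^ 2 + 4 * (r2 t) ^ 2 + (r3 t) ^ 2 =
        9 * (r1 s) ^ 2 + 4 * (r2 s) ^ 2 + (r3 s) ^ 2 ∧
      2 * (r2 t) ^ 2 - (r3 t) ^ 2 = 2 * (r2 s) ^ 2 - (r3 s) ^ 2 :=
  stmt16_general ε d6 r1 r2 r3 χ h1 h2 h3
end

section
/- Let A, B, d_6, d_9 be real numbers with A² + B² > 0 and consider the 4×4 real matrix M = [[0, 0, d_6 B/3, d_6 A/3], [0, 0, −d_6 A, d_6 B], [−d_6 B, d_6 A/3, 2d_9 B, −2d_9 A], [−d_6 A, −d_6 B/3, −2d_9 A, −2d_9 B]]. Then the characteristic polynomial of M is λ⁴ + 2(A² + B²)(d_6²/3 − 2d_9²) λ² + (A² + B²)² d_6⁴/9; equivalently, its eigenvalues satisfy λ² = −(A² + B²)[ (d_6²/3 − 2d_9²) ± 2d_9 √(d_9² − d_6²/3) ]. Moreover, if d_9 ≠ 0 and d_6² > 6d_9², then all four eigenvalues of M are non-real complex numbers with nonzero real part (the complex unstable case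 C). -/
set_option maxHeartbeats 2000000
open Matrix Polynomial

lemma specRoot19 (N : Matrix (Fin 4) (Fin 4) ℂ) (μ : ℂ) (h : μ ∈ spectrum ℂ N) :
    N.charpoly.eval μ = 0 := by
  rw [spectrum.mem_iff] at h
  have hd : (algebraMap ℂ (Matrix (Fin 4) (Fin 4) ℂ) μ - N).det = 0 := by
    by_contra hdet
    exact h ((Matrix.isUnit_iff_isUnit_det _).2 (isUnit_iff_ne_zero.2 hdet))
  have key : ((charmatrix N).map (Polynomial.eval μ)) = algebraMap ℂ (Matrix (Fin 4) (Fin 4) ℂ) μ - N := by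
    ext i j
    by_cases hij : i = j <;>
      simp [hij, charmatrix_apply_eq, charmatrix_apply_ne, Matrix.algebraMap_matrix_apply]
  have := (Polynomial.evalRingHom μ).map_det (charmatrix N)
  rw [Matrix.charpoly]
  calc Polynomial.eval μ (charmatrix N).det
      = ((Polynomial.evalRingHom μ).mapMatrix (charmatrix N)).det := this
    _ = ((charmatrix N).map (Polynomial.eval μ)).det := rfl
    _ = 0 := by rw [key, hd]

theorem stmt19 (A B d6 d9 : ℝ) (hAB : 0 < A ^ 2 + B ^ 2) :
    let M : Matrix (Fin 4) (Fin 4) ℝ :=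
      !![0, 0, d6 * B / 3, d6 * A / 3;
         0, 0, -d6 * A, d6 * B;
         -d6 * B, d6 * A / 3, 2 * d9 * B, -2 * d9 * A;
         -d6 * A, -d6 * B / 3, -2 * d9 * A, -2 * d9 * B]
    let Mc : Matrix (Fin 4) (Fin 4) ℂ := M.map (fun x => (x : ℂ))
    M.charpoly = X ^ 4 + C (2 * (A ^ 2 + B ^ 2) * (d6 ^ 2 / 3 - 2 * d9 ^ 2)) * X ^ 2
        + C ((A ^ 2 + B ^ 2) ^ 2 * d6 ^ 4 / 9) ∧
    (∃ z : ℂ, z ^ 2 = ((d9 ^ 2 - d6 ^ 2 / 3 : ℝ) : ℂ) ∧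
      ∀ μ ∈ spectrum ℂ Mc,
        μ ^ 2 = -((A ^ 2 + B ^ 2 : ℝ) : ℂ) *
            (((d6 ^ 2 / 3 - 2 * d9 ^ 2 : ℝ) : ℂ) + 2 * (d9 : ℂ) * z) ∨
        μ ^ 2 = -((A ^ 2 + B ^ 2 : ℝ) : ℂ) *
            (((d6 ^ 2 / 3 - 2 * d9 ^ 2 : ℝ) : ℂ) - 2 * (d9 : ℂ) * z)) ∧
    (d9 ≠ 0 → d6 ^ 2 > 6 * d9 ^ 2 →
      ∀ μ ∈ spectrum ℂ Mc, μ.re ≠ 0 ∧ μ.im ≠ 0) := by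
  intro M Mc
  -- characteristic polynomial over ℝ
  have hchar : M.charpoly = X ^ 4 + C (2 * (A ^ 2 + B ^ 2) * (d6 ^ 2 / 3 - 2 * d9 ^ 2)) * X ^ 2
      + C ((A ^ 2 + B ^ 2) ^ 2 * d6 ^ 4 / 9) := by
    show (!![0, 0, d6 * B / 3, d6 * A / 3;
         0, 0, -d6 * A, d6 * B;
         -d6 * B, d6 * A / 3, 2 * d9 * B, -2 * d9 * A;
         -d6 * A, -d6 * B / 3, -2 * d9 * A, -2 * d9 * B] : Matrix (Fin 4) (Fin 4) ℝ).charpoly = _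
    rw [Matrix.charpoly]
    have h23 : (Fin.succ 2 : Fin 4) = 3 := rfl
    have hs1 : (Fin.succAbove 2 2 : Fin 4) = 3 := rfl
    have hs2 : (Fin.succAbove 3 2 : Fin 4) = 2 := rfl
    have hs3 : (Fin.succAbove 2 1 : Fin 4) = 1 := rfl
    have hs4 : (Fin.succAbove 3 1 : Fin 4) = 1 := rfl
    have hs5 : (Fin.succAbove 1 1 : Fin 4) = 2 := rfl
    have hs6 : (Fin.succAbove 1 2 : Fin 4) = 3 := rfl
    simp [Matrix.det_succ_row_zero, Fin.sum_univ_succ, charmatrix, Matrix.diagonal_apply,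
      Fin.succ_zero_eq_one, Fin.succ_one_eq_two, h23, hs1, hs2, hs3, hs4, hs5, hs6]
    simp only [div_eq_mul_inv, Polynomial.C_mul, Polynomial.C_neg, Polynomial.C_add,
      Polynomial.C_pow, map_ofNat]
    have h9 : C ((9:ℝ)⁻¹) = C ((3:ℝ)⁻¹) * C ((3:ℝ)⁻¹) := by rw [← Polynomial.C_mul]; norm_num
    rw [h9]
    ring
  -- eigenvalue equation over ℂ
  have hMc : Mc = M.map (algebraMap ℝ ℂ) := rfl
  have heval : ∀ μ ∈ spectrum ℂ Mc,
      μ ^ 4 + (2 * ((A:ℂ) ^ 2 + (B:ℂ) ^ 2) * ((d6:ℂ) ^ 2 / 3 - 2 * (d9:ℂ) ^ 2)) * μ ^ 2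
        + ((A:ℂ) ^ 2 + (B:ℂ) ^ 2) ^ 2 * (d6:ℂ) ^ 4 / 9 = 0 := by
    intro μ hμ
    have h0 := specRoot19 Mc μ hμ
    rw [hMc, Matrix.charpoly_map, hchar] at h0
    simp only [Polynomial.map_add, Polynomial.map_mul, Polynomial.map_pow, Polynomial.map_C,
      Polynomial.map_X, Polynomial.eval_add, Polynomial.eval_mul, Polynomial.eval_pow,
      Polynomial.eval_C, Polynomial.eval_X, Complex.coe_algebraMap] at h0
    push_cast at h0
    linear_combination h0
  -- factorization helper
  have hfac : ∀ z : ℂ, z ^ 2 = ((d9 ^ 2 - d6 ^ 2 / 3 : ℝ) : ℂ) →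
      ∀ μ ∈ spectrum ℂ Mc,
        μ ^ 2 = -((A ^ 2 + B ^ 2 : ℝ) : ℂ) *
            (((d6 ^ 2 / 3 - 2 * d9 ^ 2 : ℝ) : ℂ) + 2 * (d9 : ℂ) * z) ∨
        μ ^ 2 = -((A ^ 2 + B ^ 2 : ℝ) : ℂ) *
            (((d6 ^ 2 / 3 - 2 * d9 ^ 2 : ℝ) : ℂ) - 2 * (d9 : ℂ) * z) := by
    intro z hz μ hμ
    have h0 := heval μ hμ
    have key : (μ ^ 2 - (-((A ^ 2 + B ^ 2 : ℝ) : ℂ) *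
            (((d6 ^ 2 / 3 - 2 * d9 ^ 2 : ℝ) : ℂ) + 2 * (d9 : ℂ) * z))) *
        (μ ^ 2 - (-((A ^ 2 + B ^ 2 : ℝ) : ℂ) *
            (((d6 ^ 2 / 3 - 2 * d9 ^ 2 : ℝ) : ℂ) - 2 * (d9 : ℂ) * z))) = 0 := by
      push_cast
      push_cast at hz
      linear_combination h0 - 4 * ((A:ℂ)^2 + (B:ℂ)^2)^2 * (d9:ℂ)^2 * hz
    rcases mul_eq_zero.1 key with h | h
    · exact Or.inl (sub_eq_zero.1 h)
    · exact Or.inr (sub_eq_zero.1 h)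
  refine ⟨hchar, ?_, ?_⟩
  · obtain ⟨z, hz⟩ := IsAlgClosed.exists_pow_nat_eq ((d9 ^ 2 - d6 ^ 2 / 3 : ℝ) : ℂ) zero_lt_two
    exact ⟨z, hz, hfac z hz⟩
  · intro hd9 hgt μ hμ
    have ht0 : (0:ℝ) < d6 ^ 2 / 3 - d9 ^ 2 := by nlinarith [sq_nonneg d9]
    set t := Real.sqrt (d6 ^ 2 / 3 - d9 ^ 2) with ht
    have htpos : 0 < t := Real.sqrt_pos.2 ht0
    have ht2 : t ^ 2 = d6 ^ 2 / 3 - d9 ^ 2 := Real.sq_sqrt ht0.le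
    have hz : ((t:ℂ) * Complex.I) ^ 2 = ((d9 ^ 2 - d6 ^ 2 / 3 : ℝ) : ℂ) := by
      have h1 : ((t:ℂ))^2 = ((d6 ^ 2 / 3 - d9 ^ 2 : ℝ) : ℂ) := by exact_mod_cast ht2
      push_cast at h1 ⊢
      rw [mul_pow, Complex.I_sq]
      linear_combination -h1
    have hne : 2 * (A ^ 2 + B ^ 2) * d9 * t ≠ 0 :=
      mul_ne_zero (mul_ne_zero (mul_ne_zero two_ne_zero hAB.ne') hd9) htpos.ne'
    have him1 : (μ ^ 2).im = -(2 * (A ^ 2 + B ^ 2) * d9 * t) ∨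
        (μ ^ 2).im = 2 * (A ^ 2 + B ^ 2) * d9 * t := by
      rcases hfac _ hz μ hμ with h | h
      · left; rw [h]
        simp only [Complex.neg_re, Complex.neg_im, Complex.mul_re, Complex.mul_im,
          Complex.add_re, Complex.add_im, Complex.sub_re, Complex.sub_im,
          Complex.ofReal_re, Complex.ofReal_im, Complex.I_re, Complex.I_im,
          Complex.re_ofNat, Complex.im_ofNat]
        ring
      · right; rw [h]
        simp only [Complex.neg_re, Complex.neg_im, Complex.mul_re, Complex.mul_im,
          Complex.add_re, Complex.add_im, Complex.sub_re, Complex.sub_im,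
          Complex.ofReal_re, Complex.ofReal_im, Complex.I_re, Complex.I_im,
          Complex.re_ofNat, Complex.im_ofNat]
        ring
    have him : (μ ^ 2).im ≠ 0 := by
      rcases him1 with h | h <;> rw [h]
      · simpa using hne
      · exact hne
    have h2im : (μ ^ 2).im = 2 * μ.re * μ.im := by
      rw [pow_two, Complex.mul_im]; ring
    rw [h2im] at him
    constructor
    · intro h; apply him; rw [h]; ring
    · intro h; apply him; rw [h]; ring
end
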